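/- arXiv:2109.10605 — 10 statements merged into one kernel-verified Lean document; each statement's English description precedes it below -/
import Mathlib

section
/- Let x ∈ 𝒳 and let i ∈ Supp(x) be a variable node of the tangent digraph 𝒟_x. Then there exists x' ∈ 𝒳 with x'_i < x_i and x'_j = x_j for every j ≠ i. -/
open scoped Classical

noncomputable section

/-- Max-plus matrix-vector product: `(A ⊗ x) i = max_j (A i j + x j)`. -/
def mpApply {n : ℕ} (A : Matrix (Fin n) (Fin n) (WithBot ℝ)) (x : Fin n → WithBot ℝ)
    (i : Fin n) : WithBot ℝ :=
  Finset.univ.sup fun j => A i j + x j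

/-- The solution set `𝒳` of `A ⊗ x ≥ x`, `x ≠ -∞`. -/
def SuperEig {n : ℕ} (A : Matrix (Fin n) (Fin n) (WithBot ℝ)) : Set (Fin n → WithBot ℝ) :=
  {x | (∀ i, x i ≤ mpApply A x i) ∧ x ≠ fun _ => (⊥ : WithBot ℝ)}

/-- `𝒳' = 𝒳 ∪ {-∞}`. -/
def SuperEig' {n : ℕ} (A : Matrix (Fin n) (Fin n) (WithBot ℝ)) : Set (Fin n → WithBot ℝ) :=
  SuperEig A ∪ {fun _ => (⊥ : WithBot ℝ)}

/-- Support of a vector. -/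
def Supp {n : ℕ} (x : Fin n → WithBot ℝ) : Set (Fin n) := {i | x i ≠ ⊥}

/-- `v` is an extremal in `𝒳'`. -/
def IsExtremal {n : ℕ} (A : Matrix (Fin n) (Fin n) (WithBot ℝ)) (v : Fin n → WithBot ℝ) :
    Prop :=
  v ∈ SuperEig' A ∧
    ∀ y ∈ SuperEig' A, ∀ z ∈ SuperEig' A, v = (fun i => y i ⊔ z i) → v = y ∨ v = z

/-- `Arc A x a b` : there is an arc from `a` to `b` in the tangent digraph `𝒟ₓ`, i.e.,
`a, b ∈ Supp x`, `A b a + x a = x b` and `A b k + x k ≤ x b` for all `k`. -/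
def Arc {n : ℕ} (A : Matrix (Fin n) (Fin n) (WithBot ℝ)) (x : Fin n → WithBot ℝ)
    (a b : Fin n) : Prop :=
  x a ≠ ⊥ ∧ x b ≠ ⊥ ∧ A b a + x a = x b ∧ ∀ k, A b k + x k ≤ x b

/-- `i` is a I-variable node: no outgoing arc other than possibly the loop `(i,i)`. -/
def IVar {n : ℕ} (A : Matrix (Fin n) (Fin n) (WithBot ℝ)) (x : Fin n → WithBot ℝ)
    (i : Fin n) : Prop :=
  x i ≠ ⊥ ∧ ∀ j, Arc A x i j → j = i

/-- `i` is a II-variable node: the endnode of any outgoing arc from `i` except the loop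
has another incoming arc. -/
def IIVar {n : ℕ} (A : Matrix (Fin n) (Fin n) (WithBot ℝ)) (x : Fin n → WithBot ℝ)
    (i : Fin n) : Prop :=
  x i ≠ ⊥ ∧ ∀ j, j ≠ i → Arc A x i j → ∃ k, k ≠ i ∧ Arc A x k j

/-- `i` is a variable node: I-variable or II-variable. -/
def VarNode {n : ℕ} (A : Matrix (Fin n) (Fin n) (WithBot ℝ)) (x : Fin n → WithBot ℝ)
    (i : Fin n) : Prop :=
  IVar A x i ∨ IIVar A x i

/-- `i` is an invariable node: some outgoing arc `(i,j)` with `j ≠ i` is the only incoming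
arc of `j`. -/
def Invariable {n : ℕ} (A : Matrix (Fin n) (Fin n) (WithBot ℝ)) (x : Fin n → WithBot ℝ)
    (i : Fin n) : Prop :=
  x i ≠ ⊥ ∧ ∃ j, j ≠ i ∧ Arc A x i j ∧ ∀ k, Arc A x k j → k = i

/-- `W` is an isolated node set in `𝒟ₓ`: `W ⊆ Supp x` and no arc joins `W` and its
complement in either direction. -/
def IsolatedSet {n : ℕ} (A : Matrix (Fin n) (Fin n) (WithBot ℝ)) (x : Fin n → WithBot ℝ)
    (W : Set (Fin n)) : Prop :=
  W ⊆ Supp x ∧ ∀ a b, Arc A x a b → (a ∈ W ↔ b ∈ W)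

/-- `𝒳^{≤ x}`: solutions below `x` and different from `x`. -/
def BelowSet {n : ℕ} (A : Matrix (Fin n) (Fin n) (WithBot ℝ)) (x : Fin n → WithBot ℝ) :
    Set (Fin n → WithBot ℝ) :=
  {y ∈ SuperEig A | y ≤ x ∧ y ≠ x}

/-- A cycle of length `k ≥ 1` in the tangent digraph `𝒟ₓ`, given by the nodes
`c 0, c 1, …, c (k-1), c 0`. Its node set is `c '' Set.Iio k`. -/
def IsCycle {n : ℕ} (A : Matrix (Fin n) (Fin n) (WithBot ℝ)) (x : Fin n → WithBot ℝ)
    (k : ℕ) (c : ℕ → Fin n) : Prop :=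
  1 ≤ k ∧ ∀ t < k, Arc A x (c t) (c ((t + 1) % k))


/-!
Lower `x i` to a real number `t` slightly below `x i`. For a row `b ≠ i`, the inequality
`x b ≤ (A ⊗ x) b` is either already attained by some `k ≠ i`, or else it is attained only by
`k = i`; in the latter case it is strict, since equality would make `(i, b)` an arc of `𝒟ₓ`
whose endnode `b` has no other incoming arc, contradicting variability of `i`. Strict
inequalities survive a small decrease of `x i`. For the row `i` itself, either `A i i ≥ 0` or
the maximum is attained off `i`, and both are stable under lowering `x i`. There are finitely
many rows, so a common `t < x i` exists.
-/

open Function Filter Topology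

section

variable {n : ℕ} (A : Matrix (Fin n) (Fin n) (WithBot ℝ)) (x : Fin n → WithBot ℝ) (i : Fin n)

def mpApplyExcept (b : Fin n) : WithBot ℝ :=
  (Finset.univ.erase i).sup fun k => A b k + x k

variable {A x i}

lemma add_le_mpApplyExcept {k : Fin n} (hk : k ≠ i) (b : Fin n) :
    A b k + x k ≤ mpApplyExcept A x i b :=
  Finset.le_sup (f := fun k => A b k + x k) (Finset.mem_erase.2 ⟨hk, Finset.mem_univ k⟩)

lemma mpApply_eq_sup_mpApplyExcept (b : Fin n) :
    mpApply A x b = (A b i + x i) ⊔ mpApplyExcept A x i b := by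
  rw [mpApply, mpApplyExcept, ← Finset.sup_insert (f := fun k => A b k + x k),
    Finset.insert_erase (Finset.mem_univ i)]

lemma mpApplyExcept_update (t : WithBot ℝ) (b : Fin n) :
    mpApplyExcept A (update x i t) i b = mpApplyExcept A x i b :=
  Finset.sup_congr rfl fun k hk => by rw [update_of_ne (Finset.mem_erase.1 hk).1]

lemma mpApply_update (t : WithBot ℝ) (b : Fin n) :
    mpApply A (update x i t) b = (A b i + t) ⊔ mpApplyExcept A x i b := by
  rw [mpApply_eq_sup_mpApplyExcept (i := i), update_self, mpApplyExcept_update]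

lemma VarNode.iIVar (h : VarNode A x i) : IIVar A x i := by
  rcases h with ⟨hxi, hI⟩ | hII
  · exact ⟨hxi, fun j hj harc => absurd (hI j harc) hj⟩
  · exact hII

lemma lt_add_of_mpApplyExcept_lt (hx : ∀ b, x b ≤ mpApply A x b) (hvar : IIVar A x i)
    {b : Fin n} (hb : b ≠ i) (hS : mpApplyExcept A x i b < x b) : x b < A b i + x i := by
  have hle : x b ≤ A b i + x i := by
    have := (hx b).trans_eq (mpApply_eq_sup_mpApplyExcept (i := i) b)
    exact (le_sup_iff.1 this).resolve_right hS.not_ge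
  refine hle.lt_of_ne fun heq => ?_
  have harc : Arc A x i b := by
    refine ⟨hvar.1, ne_bot_of_gt hS, heq.symm, fun k => ?_⟩
    rcases eq_or_ne k i with rfl | hk
    · exact heq.ge
    · exact (add_le_mpApplyExcept hk b).trans hS.le
  obtain ⟨k, hki, hk⟩ := hvar.2 b hb harc
  exact hS.not_ge (hk.2.2.1 ▸ add_le_mpApplyExcept hki b)

lemma eventually_lt_add_coe {y a : WithBot ℝ} {r : ℝ} (h : y < a + r) :
    ∀ᶠ t : ℝ in 𝓝 r, y < a + t := by
  induction a using WithBot.recBotCoe with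
  | bot => simp at h
  | coe a =>
    induction y using WithBot.recBotCoe with
    | bot => exact .of_forall fun t => by norm_cast; exact WithBot.bot_lt_coe _
    | coe s =>
      norm_cast at h ⊢
      exact (eventually_gt_nhds (sub_lt_iff_lt_add'.2 h)).mono fun t ht => by linarith

lemma coe_le_add_coe {a : WithBot ℝ} {r : ℝ} (h : (r : WithBot ℝ) ≤ a + r) (t : ℝ) :
    (t : WithBot ℝ) ≤ a + t := by
  induction a using WithBot.recBotCoe with
  | bot => simp at h
  | coe a =>
    norm_cast at h ⊢
    linarith

lemma eventually_le_mpApply_update_of_ne (hx : ∀ b, x b ≤ mpApply A x b) (hvar : IIVar A x i)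
    {r : ℝ} (hr : x i = r) {b : Fin n} (hb : b ≠ i) :
    ∀ᶠ t : ℝ in 𝓝 r, x b ≤ mpApply A (update x i (t : WithBot ℝ)) b := by
  simp only [mpApply_update]
  rcases le_or_gt (x b) (mpApplyExcept A x i b) with hS | hS
  · exact .of_forall fun _ => le_sup_of_le_right hS
  · have hlt := lt_add_of_mpApplyExcept_lt hx hvar hb hS
    rw [hr] at hlt
    exact (eventually_lt_add_coe hlt).mono fun _ ht => le_sup_of_le_left ht.le

lemma eventually_coe_le_mpApply_update_self (hx : ∀ b, x b ≤ mpApply A x b) {r : ℝ}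
    (hr : x i = r) :
    ∀ᶠ t : ℝ in 𝓝[<] r, (t : WithBot ℝ) ≤ mpApply A (update x i (t : WithBot ℝ)) i := by
  simp only [mpApply_update]
  have hxi := (hx i).trans_eq (mpApply_eq_sup_mpApplyExcept (i := i) i)
  rw [hr] at hxi
  rcases le_sup_iff.1 hxi with hloop | hS
  · exact .of_forall fun t => le_sup_of_le_left (coe_le_add_coe hloop t)
  · filter_upwards [self_mem_nhdsWithin] with t (ht : t < r)
    exact le_sup_of_le_right ((WithBot.coe_le_coe.2 ht.le).trans hS)

end

theorem stmt2_general {n : ℕ} (A : Matrix (Fin n) (Fin n) (WithBot ℝ)) (x : Fin n → WithBot ℝ)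
    (hx : x ∈ SuperEig A) (i : Fin n) (hvar : VarNode A x i) :
    ∃ x' ∈ SuperEig A, x' i < x i ∧ ∀ j, j ≠ i → x' j = x j := by
  obtain ⟨hle, -⟩ := hx
  have hII := hvar.iIVar
  obtain ⟨r, hr⟩ := WithBot.ne_bot_iff_exists.1 hII.1
  have hsuper : ∀ᶠ t : ℝ in 𝓝[<] r,
      ∀ b, update x i (t : WithBot ℝ) b ≤ mpApply A (update x i (t : WithBot ℝ)) b := by
    refine eventually_all.2 fun b => ?_
    rcases eq_or_ne b i with rfl | hb
    · simpa using eventually_coe_le_mpApply_update_self hle hr.symm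
    · simpa [update_of_ne hb] using
        (eventually_le_mpApply_update_of_ne hle hII hr.symm hb).filter_mono nhdsWithin_le_nhds
  obtain ⟨t, ht, htr⟩ := (hsuper.and self_mem_nhdsWithin).exists
  refine ⟨update x i t, ⟨ht, fun h => by simpa using congrFun h i⟩, ?_,
    fun j hj => update_of_ne hj _ _⟩
  simpa [← hr] using htr

/-- a variable node can be lowered within `𝒳`. -/
theorem stmt2 {n : ℕ} (A : Matrix (Fin n) (Fin n) (WithBot ℝ)) (x : Fin n → WithBot ℝ)
    (hx : x ∈ SuperEig A) (i : Fin n) (hi : i ∈ Supp x) (hvar : VarNode A x i) :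
    ∃ x' ∈ SuperEig A, x' i < x i ∧ ∀ j, j ≠ i → x' j = x j :=
  stmt2_general A x hx i hvar
end
end

section
/- Let x ∈ 𝒳. If there are at least two distinct variable nodes in the tangent digraph 𝒟_x, then x is not an extremal in 𝒳'. -/
open scoped Classical

noncomputable section

/-!
Lowering the value of a variable node `i` slightly keeps `x` in `𝒳`: a row `m ≠ i` whose maximum
is attained only at `i` would yield an arc `(i, m)` that is the only arc entering `m`, which is
excluded for variable nodes, so every other row either has a tight term away from `i` or has
slack in its `i`-term. Lowering two distinct variable nodes separately gives two solutions
strictly below `x` whose maximum is `x`.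
-/

open Filter Topology Function

lemma le_mpApply {n : ℕ} (A : Matrix (Fin n) (Fin n) (WithBot ℝ)) (x : Fin n → WithBot ℝ)
    (m k : Fin n) : A m k + x k ≤ mpApply A x m :=
  Finset.le_sup (f := fun j => A m j + x j) (Finset.mem_univ k)

lemma exists_le_of_le_mpApply {n : ℕ} {A : Matrix (Fin n) (Fin n) (WithBot ℝ)}
    {x : Fin n → WithBot ℝ} {m : Fin n} {a : WithBot ℝ} (ha : a ≠ ⊥)
    (h : a ≤ mpApply A x m) : ∃ k, a ≤ A m k + x k := by
  obtain ⟨k, -, hk⟩ := (Finset.le_sup_iff ha.bot_lt).mp h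
  exact ⟨k, hk⟩

lemma WithBot.coe_le_add_coe_sub {c : WithBot ℝ} {r ε : ℝ} (h : (r : WithBot ℝ) ≤ c + r) :
    ((r - ε : ℝ) : WithBot ℝ) ≤ c + ((r - ε : ℝ) : WithBot ℝ) := by
  induction c using WithBot.recBotCoe with
  | bot => simp at h
  | coe a =>
    norm_cast at h ⊢
    linarith

lemma WithBot.eventually_le_add_coe_sub {c d : WithBot ℝ} {r : ℝ} (h : c < d + r) :
    ∀ᶠ ε in 𝓝 (0 : ℝ), c ≤ d + ((r - ε : ℝ) : WithBot ℝ) := by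
  induction c using WithBot.recBotCoe with
  | bot => exact Eventually.of_forall fun _ => bot_le
  | coe p =>
    induction d using WithBot.recBotCoe with
    | bot => simp at h
    | coe a =>
      norm_cast at h
      filter_upwards [eventually_lt_nhds (sub_pos.2 h)] with ε hε
      norm_cast
      linarith

lemma WithBot.exists_pos_forall_le_add_coe_sub {ι : Type*} [Finite ι] (c d : ι → WithBot ℝ)
    (r : ℝ) : ∃ ε > 0, ∀ m, c m < d m + r → c m ≤ d m + ((r - ε : ℝ) : WithBot ℝ) := by
  have hgap : ∀ m, ∀ᶠ ε in 𝓝 (0 : ℝ), c m < d m + r → c m ≤ d m + ((r - ε : ℝ) : WithBot ℝ) := by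
    intro m
    by_cases h : c m < d m + r
    · exact (eventually_le_add_coe_sub h).mono fun _ hε _ => hε
    · exact Eventually.of_forall fun _ h' => absurd h' h
  obtain ⟨ε, hε, hεpos⟩ :=
    ((eventually_all.2 hgap).filter_mono nhdsWithin_le_nhds |>.and self_mem_nhdsWithin).exists
      (f := 𝓝[>] (0 : ℝ))
  exact ⟨ε, hεpos, hε⟩

namespace VarNode

variable {n : ℕ} {A : Matrix (Fin n) (Fin n) (WithBot ℝ)} {x : Fin n → WithBot ℝ} {i : Fin n}

lemma ne_bot (hi : VarNode A x i) : x i ≠ ⊥ := by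
  rcases hi with h | h <;> exact h.1

lemma exists_tight_ne_or_lt (hi : VarNode A x i) (hx : ∀ m, x m ≤ mpApply A x m) {m : Fin n}
    (hmi : m ≠ i) (hm : x m ≠ ⊥) :
    (∃ k, k ≠ i ∧ x m ≤ A m k + x k) ∨ x m < A m i + x i := by
  by_contra! ⟨hlt, hle⟩
  obtain ⟨k, hk⟩ := exists_le_of_le_mpApply hm (hx m)
  obtain rfl : k = i := by_contra fun hki => (hlt k hki).not_ge hk
  have harc : Arc A x k m := by
    refine ⟨hi.ne_bot, hm, hle.antisymm hk, fun l => ?_⟩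
    rcases eq_or_ne l k with rfl | hl
    · exact hle
    · exact (hlt l hl).le
  rcases hi with ⟨-, hI⟩ | ⟨-, hII⟩
  · exact hmi (hI m harc)
  · obtain ⟨l, hl, harc'⟩ := hII m hmi harc
    exact (hlt l hl).ne harc'.2.2.1

lemma exists_update_lt_mem (hi : VarNode A x i) (hx : x ∈ SuperEig A) :
    ∃ t < x i, update x i t ∈ SuperEig A := by
  obtain ⟨r, hr⟩ := WithBot.ne_bot_iff_exists.mp hi.ne_bot
  obtain ⟨ε, hεpos, hε⟩ := WithBot.exists_pos_forall_le_add_coe_sub x (A · i) r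
  rw [hr] at hε
  have hlt : ((r - ε : ℝ) : WithBot ℝ) < x i := by
    rw [← hr, WithBot.coe_lt_coe]
    linarith
  set y := update x i ((r - ε : ℝ) : WithBot ℝ)
  refine ⟨_, hlt, fun m => ?_, fun h => by simpa [y] using congrFun h i⟩
  have hy : ∀ k, k ≠ i → y k = x k := fun k hk => update_of_ne hk _ _
  change y m ≤ mpApply A y m
  rcases eq_or_ne m i with rfl | hmi
  · obtain ⟨k, hk⟩ := exists_le_of_le_mpApply hi.ne_bot (hx.1 m)
    refine le_trans ?_ (le_mpApply A y m k)
    rcases eq_or_ne k m with rfl | hkm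
    · rw [← hr] at hk
      simpa [y] using WithBot.coe_le_add_coe_sub hk
    · simpa [y, hkm] using hlt.le.trans hk
  · rw [hy m hmi]
    rcases eq_or_ne (x m) ⊥ with hm | hm
    · exact hm ▸ bot_le
    rcases hi.exists_tight_ne_or_lt hx.1 hmi hm with ⟨k, hki, hk⟩ | hm'
    · calc x m ≤ A m k + x k := hk
        _ = A m k + y k := by rw [hy k hki]
        _ ≤ mpApply A y m := le_mpApply A y m k
    · calc x m ≤ A m i + y i := by simpa [y] using hε m hm'
        _ ≤ mpApply A y m := le_mpApply A y m i

end VarNode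

lemma update_sup_update_eq {ι α : Type*} [DecidableEq ι] [SemilatticeSup α] {x : ι → α} {i j : ι}
    (hij : i ≠ j) {s t : α} (hs : s ≤ x i) (ht : t ≤ x j) :
    (fun m => update x i s m ⊔ update x j t m) = x := by
  funext m
  rcases eq_or_ne m i with rfl | hmi
  · simp [hij, hs]
  · rcases eq_or_ne m j with rfl | hmj
    · simp [hmi, ht]
    · simp [hmi, hmj]

/-- two distinct variable nodes imply `x` is not an extremal in `𝒳'`. -/
theorem stmt5 {n : ℕ} (A : Matrix (Fin n) (Fin n) (WithBot ℝ)) (x : Fin n → WithBot ℝ)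
    (hx : x ∈ SuperEig A) (i j : Fin n) (hij : i ≠ j)
    (hi : VarNode A x i) (hj : VarNode A x j) : ¬ IsExtremal A x := by
  rintro ⟨-, hext⟩
  obtain ⟨s, hs, hys⟩ := hi.exists_update_lt_mem hx
  obtain ⟨t, ht, hzt⟩ := hj.exists_update_lt_mem hx
  rcases hext _ (Or.inl hys) _ (Or.inl hzt) (update_sup_update_eq hij hs.le ht.le).symm with h | h
  · exact hs.ne' (by simpa using congrFun h i)
  · exact ht.ne' (by simpa using congrFun h j)
end
end

section
/- Let x ∈ 𝒳 and let i ∈ Supp(x) be an invariable node of the tangent digraph 𝒟_x. Then x' ∉ 𝒳 for every x' ∈ R̄^n satisfying x'_i < x_i and x'_j = x_j for all j ≠ i. -/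
open scoped Classical

noncomputable section

/- The arc `(i, j)` is the only one entering `j`, so every term `A j k + x k` of `(A ⊗ x) j`
other than the one with `k = i` is strictly below `x j`. Lowering `x i` alone makes that term
strictly smaller too, so `(A ⊗ x') j < x j = x' j` and `x'` violates `A ⊗ x' ≥ x'` at `j`. -/

theorem mpApply_lt_iff {n : ℕ} {A : Matrix (Fin n) (Fin n) (WithBot ℝ)}
    {y : Fin n → WithBot ℝ} {j : Fin n} {b : WithBot ℝ} (hb : b ≠ ⊥) :
    mpApply A y j < b ↔ ∀ k, A j k + y k < b := by
  simp [mpApply, Finset.sup_lt_iff hb.bot_lt]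

section Arc

variable {n : ℕ} {A : Matrix (Fin n) (Fin n) (WithBot ℝ)} {x : Fin n → WithBot ℝ} {i j k : Fin n}

theorem Arc.add_lt_of_lt (h : Arc A x i j) {c : WithBot ℝ} (hc : c < x i) :
    A j i + c < x j := by
  obtain ⟨-, hxj, hij, -⟩ := h
  have hAji : A j i ≠ ⊥ := fun hbot => hxj (by simp [← hij, hbot])
  exact hij ▸ WithBot.add_lt_add_left hAji hc

theorem add_lt_of_not_arc (hxj : x j ≠ ⊥) (hle : ∀ l, A j l + x l ≤ x j)
    (hk : ¬ Arc A x k j) : A j k + x k < x j := by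
  refine (hle k).lt_of_ne fun hkj => hk ⟨?_, hxj, hkj, hle⟩
  exact fun hbot => hxj (by simp [← hkj, hbot])

theorem mpApply_lt_of_unique_arc (hij : Arc A x i j) (huniq : ∀ k, Arc A x k j → k = i)
    {x' : Fin n → WithBot ℝ} (hlt : x' i < x i) (heq : ∀ k, k ≠ i → x' k = x k) :
    mpApply A x' j < x j := by
  refine (mpApply_lt_iff hij.2.1).2 fun k => ?_
  by_cases hki : k = i
  · exact hki ▸ hij.add_lt_of_lt hlt
  · rw [heq k hki]
    exact add_lt_of_not_arc hij.2.1 hij.2.2.2 (mt (huniq k) hki)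

end Arc

theorem stmt6_general {n : ℕ} (A : Matrix (Fin n) (Fin n) (WithBot ℝ)) (x : Fin n → WithBot ℝ)
    (i : Fin n) (hinv : Invariable A x i) :
    ∀ x' : Fin n → WithBot ℝ, x' i < x i → (∀ j, j ≠ i → x' j = x j) →
      x' ∉ SuperEig A := by
  intro x' hlt heq hx'
  obtain ⟨-, j, hji, hij, huniq⟩ := hinv
  have hdrop : mpApply A x' j < x' j := heq j hji ▸ mpApply_lt_of_unique_arc hij huniq hlt heq
  exact (hx'.1 j).not_gt hdrop

/-- an invariable node cannot be lowered within `𝒳`. -/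
theorem stmt6 {n : ℕ} (A : Matrix (Fin n) (Fin n) (WithBot ℝ)) (x : Fin n → WithBot ℝ)
    (hx : x ∈ SuperEig A) (i : Fin n) (hi : i ∈ Supp x) (hinv : Invariable A x i) :
    ∀ x' : Fin n → WithBot ℝ, x' i < x i → (∀ j, j ≠ i → x' j = x j) →
      x' ∉ SuperEig A :=
  stmt6_general A x i hinv
end
end

section
/- Let x ∈ 𝒳. If there are at least two cycles in the tangent digraph 𝒟_x whose node sets are disjoint, then x is not an extremal in 𝒳'. -/
open scoped Classical

noncomputable section

/-!
Call a node set `M` viable if every node of `M` with an incoming arc of `𝒟ₓ` has one from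
inside `M`. Lowering `x` by a small `ε > 0` off a viable set keeps it a solution: the nodes of
`M` that were tight stay tight through their arc inside `M`, and the others had slack. A cycle
is viable, and so is the largest viable set `Mᵢ` avoiding the cycle `Cᵢ`. For disjoint cycles
`C₁ ⊆ M₂` and `C₂ ⊆ M₁`, and the support nodes outside `M₁ ∪ M₂` form a viable set avoiding
`C₁`, hence are none; so `x` is the maximum of its lowerings off `M₂` and off `M₁`, and each of
them differs from `x` on a cycle.
-/

open Filter Topology

namespace MaxPlus

lemma add_coe_neg_le (a : WithBot ℝ) {ε : ℝ} (hε : 0 ≤ ε) : a + ((-ε : ℝ) : WithBot ℝ) ≤ a :=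
  add_le_of_nonpos_right (WithBot.coe_le_zero.2 (neg_nonpos.2 hε))

lemma add_coe_add_coe_neg (a : WithBot ℝ) (ε : ℝ) :
    a + (ε : WithBot ℝ) + ((-ε : ℝ) : WithBot ℝ) = a := by
  rw [add_assoc, ← WithBot.coe_add, add_neg_cancel, WithBot.coe_zero, add_zero]

lemma add_coe_neg_ne {a : WithBot ℝ} (ha : a ≠ ⊥) {ε : ℝ} (hε : ε ≠ 0) :
    a + ((-ε : ℝ) : WithBot ℝ) ≠ a := by
  obtain ⟨r, rfl⟩ := WithBot.ne_bot_iff_exists.1 ha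
  rw [← WithBot.coe_add, Ne, WithBot.coe_inj]
  exact fun h => hε (by linarith)

lemma eventually_add_coe_le {a b : WithBot ℝ} (h : a < b) :
    ∀ᶠ ε : ℝ in 𝓝[>] 0, a + (ε : WithBot ℝ) ≤ b := by
  induction a with
  | bot => exact .of_forall fun _ => by simp
  | coe r =>
    obtain ⟨s, rfl⟩ := WithBot.ne_bot_iff_exists.1 (ne_bot_of_gt h)
    have hrs : 0 < s - r := sub_pos.2 (WithBot.coe_lt_coe.1 h)
    filter_upwards [nhdsWithin_le_nhds (Iio_mem_nhds hrs)] with ε hε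
    rw [← WithBot.coe_add, WithBot.coe_le_coe]
    linarith [Set.mem_Iio.1 hε]

variable {n : ℕ} {A : Matrix (Fin n) (Fin n) (WithBot ℝ)} {x y : Fin n → WithBot ℝ}

lemma le_mpApply (i j : Fin n) : A i j + x j ≤ mpApply A x i :=
  Finset.le_sup (f := fun j => A i j + x j) (Finset.mem_univ j)

lemma mpApply_mono (h : x ≤ y) (i : Fin n) : mpApply A x i ≤ mpApply A y i :=
  Finset.sup_mono_fun fun j _ => add_le_add_right (h j) _

lemma mpApply_add_const (c : WithBot ℝ) (i : Fin n) :
    mpApply A (fun j => x j + c) i = mpApply A x i + c := by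
  simp only [mpApply, ← add_assoc]
  exact (Finset.apply_sup_eq_sup_comp (· + c) (fun a b => max_add a b c) (WithBot.bot_add c)).symm

lemma exists_arc_of_mpApply_eq {i : Fin n} (hxi : x i ≠ ⊥) (h : mpApply A x i = x i) :
    ∃ j, Arc A x j i := by
  obtain ⟨j, -, hj⟩ := Finset.exists_mem_eq_sup Finset.univ ⟨i, Finset.mem_univ i⟩
    fun j => A i j + x j
  have htight : A i j + x j = x i := hj.symm.trans h
  refine ⟨j, fun hj => hxi ?_, hxi, htight, fun k => h ▸ le_mpApply i k⟩
  rw [← htight, hj, WithBot.add_bot]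

lemma mem_superEig' (h : ∀ i, y i ≤ mpApply A y i) : y ∈ SuperEig' A := by
  by_cases hy : y = fun _ => ⊥
  · exact Or.inr hy
  · exact Or.inl ⟨h, hy⟩

variable (A x) in
def IsViable (M : Set (Fin n)) : Prop :=
  ∀ i ∈ M, (∃ j, Arc A x j i) → ∃ j ∈ M, Arc A x j i

lemma IsViable.sUnion {S : Set (Set (Fin n))} (hS : ∀ V ∈ S, IsViable A x V) :
    IsViable A x (⋃₀ S) := by
  rintro i ⟨V, hVS, hiV⟩ hsat
  obtain ⟨j, hjV, hj⟩ := hS V hVS i hiV hsat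
  exact ⟨j, ⟨V, hVS, hjV⟩, hj⟩

lemma IsViable.insert {V : Set (Fin n)} (hV : IsViable A x V) {i j : Fin n} (hjV : j ∈ V)
    (hji : Arc A x j i) : IsViable A x (insert i V) := by
  rintro m (rfl | hmV) hsat
  · exact ⟨j, Or.inr hjV, hji⟩
  · obtain ⟨l, hlV, hl⟩ := hV m hmV hsat
    exact ⟨l, Or.inr hlV, hl⟩

lemma IsCycle.exists_arc_to {k : ℕ} {c : ℕ → Fin n} (h : IsCycle A x k c) {t : ℕ}
    (ht : t < k) : ∃ s < k, Arc A x (c s) (c t) := by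
  obtain ⟨hk, harc⟩ := h
  refine ⟨(t + (k - 1)) % k, Nat.mod_lt _ hk, ?_⟩
  have hsucc : ((t + (k - 1)) % k + 1) % k = t := by
    rw [Nat.mod_add_mod, show t + (k - 1) + 1 = t + k by omega, Nat.add_mod_right,
      Nat.mod_eq_of_lt ht]
  simpa only [hsucc] using harc ((t + (k - 1)) % k) (Nat.mod_lt _ hk)

lemma IsCycle.isViable {k : ℕ} {c : ℕ → Fin n} (h : IsCycle A x k c) :
    IsViable A x (c '' Set.Iio k) := by
  rintro _ ⟨t, ht, rfl⟩ -
  obtain ⟨s, hs, harc⟩ := IsCycle.exists_arc_to h ht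
  exact ⟨c s, ⟨s, hs, rfl⟩, harc⟩

section Lowering

def lowerOff (x : Fin n → WithBot ℝ) (M : Set (Fin n)) (ε : ℝ) : Fin n → WithBot ℝ :=
  fun i => if i ∈ M then x i else x i + ((-ε : ℝ) : WithBot ℝ)

variable {M : Set (Fin n)} {ε : ℝ} {i : Fin n}

lemma lowerOff_of_mem (hi : i ∈ M) : lowerOff x M ε i = x i := if_pos hi

lemma lowerOff_of_notMem (hi : i ∉ M) : lowerOff x M ε i = x i + ((-ε : ℝ) : WithBot ℝ) :=
  if_neg hi

lemma lowerOff_le (hε : 0 ≤ ε) : lowerOff x M ε ≤ x := fun i => by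
  by_cases hi : i ∈ M
  · rw [lowerOff_of_mem hi]
  · rw [lowerOff_of_notMem hi]
    exact add_coe_neg_le _ hε

lemma add_coe_neg_le_lowerOff (hε : 0 ≤ ε) :
    (fun i => x i + ((-ε : ℝ) : WithBot ℝ)) ≤ lowerOff x M ε := fun i => by
  by_cases hi : i ∈ M
  · rw [lowerOff_of_mem hi]
    exact add_coe_neg_le _ hε
  · rw [lowerOff_of_notMem hi]

lemma lowerOff_ne (hε : ε ≠ 0) (hxi : x i ≠ ⊥) (hi : i ∉ M) : lowerOff x M ε ≠ x :=
  fun h => add_coe_neg_ne hxi hε (by rw [← lowerOff_of_notMem hi, h])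

lemma eventually_lowerOff_mem (hx : ∀ i, x i ≤ mpApply A x i) (hM : IsViable A x M) :
    ∀ᶠ ε : ℝ in 𝓝[>] 0, lowerOff x M ε ∈ SuperEig' A := by
  have hslack : ∀ᶠ ε : ℝ in 𝓝[>] 0,
      ∀ i, x i < mpApply A x i → x i + (ε : WithBot ℝ) ≤ mpApply A x i :=
    eventually_all.2 fun i => by
      by_cases hlt : x i < mpApply A x i
      · exact (eventually_add_coe_le hlt).mono fun _ h _ => h
      · exact .of_forall fun _ h => absurd h hlt
  filter_upwards [hslack, self_mem_nhdsWithin] with ε hslack hε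
  have hlower : ∀ i, mpApply A x i + ((-ε : ℝ) : WithBot ℝ) ≤ mpApply A (lowerOff x M ε) i :=
    fun i => mpApply_add_const (x := x) _ i ▸ mpApply_mono (add_coe_neg_le_lowerOff hε.le) i
  refine mem_superEig' fun i => ?_
  by_cases hi : i ∈ M
  · rw [lowerOff_of_mem hi]
    obtain hbot | hbot := eq_or_ne (x i) ⊥
    · simp [hbot]
    obtain hlt | htight := (hx i).lt_or_eq
    · calc x i = x i + (ε : WithBot ℝ) + ((-ε : ℝ) : WithBot ℝ) :=
            (add_coe_add_coe_neg _ ε).symm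
        _ ≤ mpApply A x i + ((-ε : ℝ) : WithBot ℝ) := add_le_add_left (hslack i hlt) _
        _ ≤ mpApply A (lowerOff x M ε) i := hlower i
    · obtain ⟨j, hjM, hj⟩ := hM i hi (exists_arc_of_mpApply_eq hbot htight.symm)
      calc x i = A i j + lowerOff x M ε j := by rw [lowerOff_of_mem hjM, hj.2.2.1]
        _ ≤ mpApply A (lowerOff x M ε) i := le_mpApply i j
  · rw [lowerOff_of_notMem hi]
    exact (add_le_add_left (hx i) _).trans (hlower i)

end Lowering

section MaxViable

variable (A x) in
def maxViableAvoiding (C : Set (Fin n)) : Set (Fin n) :=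
  ⋃₀ {V | IsViable A x V ∧ Disjoint V C}

variable {C C₁ C₂ : Set (Fin n)}

lemma isViable_maxViableAvoiding : IsViable A x (maxViableAvoiding A x C) :=
  IsViable.sUnion fun _ hV => hV.1

lemma disjoint_maxViableAvoiding : Disjoint (maxViableAvoiding A x C) C :=
  Set.disjoint_sUnion_left.2 fun _ hV => hV.2

lemma subset_maxViableAvoiding {V : Set (Fin n)} (hV : IsViable A x V) (hVC : Disjoint V C) :
    V ⊆ maxViableAvoiding A x C :=
  Set.subset_sUnion_of_mem ⟨hV, hVC⟩

lemma mem_maxViableAvoiding_of_arc {i j : Fin n} (hj : j ∈ maxViableAvoiding A x C)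
    (hji : Arc A x j i) (hi : i ∉ C) : i ∈ maxViableAvoiding A x C :=
  subset_maxViableAvoiding (isViable_maxViableAvoiding.insert hj hji)
    (Set.disjoint_insert_left.2 ⟨hi, disjoint_maxViableAvoiding⟩) (Set.mem_insert i _)

lemma supp_subset_maxViableAvoiding_union (hC₁ : IsViable A x C₁) (hC₂ : IsViable A x C₂)
    (hd : Disjoint C₁ C₂) :
    Supp x ⊆ maxViableAvoiding A x C₁ ∪ maxViableAvoiding A x C₂ := by
  have hC₁M₂ := subset_maxViableAvoiding hC₁ hd
  have hC₂M₁ := subset_maxViableAvoiding hC₂ hd.symm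
  set Rest := Supp x \ (maxViableAvoiding A x C₁ ∪ maxViableAvoiding A x C₂)
  have hRest : IsViable A x Rest := by
    rintro i ⟨-, hi⟩ ⟨j, hji⟩
    simp only [Set.mem_union, not_or] at hi
    refine ⟨j, ⟨hji.1, ?_⟩, hji⟩
    rintro (hj | hj)
    · exact hi.1 (mem_maxViableAvoiding_of_arc hj hji fun h => hi.2 (hC₁M₂ h))
    · exact hi.2 (mem_maxViableAvoiding_of_arc hj hji fun h => hi.1 (hC₂M₁ h))
  have hRestC₁ : Disjoint Rest C₁ :=
    Set.disjoint_left.2 fun i hi hiC => hi.2 (Or.inr (hC₁M₂ hiC))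
  intro i hi
  by_contra hiM
  exact hiM (Or.inl (subset_maxViableAvoiding hRest hRestC₁ ⟨hi, hiM⟩))

end MaxViable

theorem not_isExtremal_of_disjoint_isViable (hx : ∀ i, x i ≤ mpApply A x i)
    {C₁ C₂ : Set (Fin n)} (hC₁ : IsViable A x C₁) (hC₂ : IsViable A x C₂) (hd : Disjoint C₁ C₂)
    {i₁ i₂ : Fin n} (hi₁ : i₁ ∈ C₁) (hi₂ : i₂ ∈ C₂) (hxi₁ : x i₁ ≠ ⊥) (hxi₂ : x i₂ ≠ ⊥) :
    ¬ IsExtremal A x := by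
  set M₁ := maxViableAvoiding A x C₁
  set M₂ := maxViableAvoiding A x C₂
  obtain ⟨ε, hy, hz, hε⟩ :=
    ((eventually_lowerOff_mem hx (isViable_maxViableAvoiding (C := C₂))).and
      ((eventually_lowerOff_mem hx (isViable_maxViableAvoiding (C := C₁))).and
        self_mem_nhdsWithin)).exists
  have hsup : x = fun i => lowerOff x M₂ ε i ⊔ lowerOff x M₁ ε i := by
    funext i
    refine le_antisymm ?_ (sup_le (lowerOff_le hε.le i) (lowerOff_le hε.le i))
    by_cases hxi : x i = ⊥
    · simp [hxi]
    rcases supp_subset_maxViableAvoiding_union hC₁ hC₂ hd hxi with hi | hi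
    · exact (lowerOff_of_mem hi).ge.trans le_sup_right
    · exact (lowerOff_of_mem hi).ge.trans le_sup_left
  intro hext
  rcases hext.2 _ hy _ hz hsup with h | h
  · exact lowerOff_ne hε.ne' hxi₂ (Set.disjoint_left.1 disjoint_maxViableAvoiding · hi₂) h.symm
  · exact lowerOff_ne hε.ne' hxi₁ (Set.disjoint_left.1 disjoint_maxViableAvoiding · hi₁) h.symm

end MaxPlus

open MaxPlus in
/-- two node-disjoint cycles in `𝒟ₓ` imply `x` is not an extremal in `𝒳'`. -/
theorem stmt8 {n : ℕ} (A : Matrix (Fin n) (Fin n) (WithBot ℝ)) (x : Fin n → WithBot ℝ)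
    (hx : x ∈ SuperEig A) (k₁ k₂ : ℕ) (c₁ c₂ : ℕ → Fin n)
    (h₁ : IsCycle A x k₁ c₁) (h₂ : IsCycle A x k₂ c₂)
    (hd : Disjoint (c₁ '' Set.Iio k₁) (c₂ '' Set.Iio k₂)) : ¬ IsExtremal A x :=
  not_isExtremal_of_disjoint_isViable hx.1 h₁.isViable h₂.isViable hd
    ⟨0, h₁.1, rfl⟩ ⟨0, h₂.1, rfl⟩ (h₁.2 0 h₁.1).1 (h₂.2 0 h₂.1).1
end
end

section
/- Let x ∈ 𝒳. If no nonempty proper subset of Supp(x) is isolated in the tangent digraph 𝒟_x and every node of Supp(x) is invariable in 𝒟_x, then for every x' ∈ 𝒳^{≤x} one has x'_i < x_i for all i ∈ Supp(x). -/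
open scoped Classical

noncomputable section

/-! For each `a ∈ Supp x` invariability provides a node `f a` whose only incoming arc is
`(a, f a)`. Such an `f` is injective, hence a permutation of the finite set `Supp x`, and every
arc of `𝒟ₓ` is of the form `(a, f a)`. If `x'ᵢ = xᵢ` at `i = f a`, the maximum defining
`(A ⊗ x')ᵢ` is attained along an arc `(k, i)` with `x'ₖ = xₖ`, forcing `k = a`. So `f` maps
`U = {x' < x}` into itself, hence also its complement `W` in `Supp x`, and `W` is isolated;
it contains every node where `x'` and `x` agree, and is proper because `x' ≠ x`. -/

theorem Set.mapsTo_diff_of_injOn {α : Type*} {f : α → α} {s t : Set α} (hinj : Set.InjOn f s)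
    (hs : Set.MapsTo f s s) (hts : t ⊆ s) (ht : t.Finite) (htt : Set.MapsTo f t t) :
    Set.MapsTo f (s \ t) (s \ t) := by
  rintro a ⟨has, hat⟩
  refine ⟨hs has, fun hfa => hat ?_⟩
  obtain ⟨b, hbt, hb⟩ := ((ht.injOn_iff_bijOn_of_mapsTo htt).mp (hinj.mono hts)).surjOn hfa
  exact hinj (hts hbt) has hb ▸ hbt

section TangentDigraph

variable {n : ℕ} {A : Matrix (Fin n) (Fin n) (WithBot ℝ)} {x x' : Fin n → WithBot ℝ}

def IsSoleArc (A : Matrix (Fin n) (Fin n) (WithBot ℝ)) (x : Fin n → WithBot ℝ) (a b : Fin n) :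
    Prop :=
  Arc A x a b ∧ ∀ k, Arc A x k b → k = a

theorem exists_isSoleArc_map (hinv : ∀ i ∈ Supp x, Invariable A x i) :
    ∃ f : Fin n → Fin n, ∀ a ∈ Supp x, IsSoleArc A x a (f a) := by
  choose! f hf using fun a ha => (hinv a ha).2
  exact ⟨f, fun a ha => (hf a ha).2⟩

theorem exists_arc_eq_of_apply_eq {b : Fin n} (hle : x' ≤ x) (hx' : x' b ≤ mpApply A x' b)
    (hb : ∀ k, A b k + x k ≤ x b) (hxb : x b ≠ ⊥) (heq : x' b = x b) :
    ∃ k, Arc A x k b ∧ x' k = x k := by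
  obtain ⟨k, -, hk⟩ := (Finset.le_sup_iff hxb.bot_lt).mp (heq ▸ hx')
  have hmono : A b k + x' k ≤ A b k + x k := add_le_add_right (hle k) _
  have htight' : A b k + x' k = x b := le_antisymm (hmono.trans (hb k)) hk
  have htight : A b k + x k = x b := le_antisymm (hb k) (htight' ▸ hmono)
  obtain ⟨hAk, hxk⟩ := WithBot.add_ne_bot.mp (htight ▸ hxb)
  exact ⟨k, ⟨hxk, hxb, htight, hb⟩, WithBot.add_left_cancel hAk (htight'.trans htight.symm)⟩

variable {f : Fin n → Fin n}

theorem injOn_of_isSoleArc (hf : ∀ a ∈ Supp x, IsSoleArc A x a (f a)) : Set.InjOn f (Supp x) :=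
  fun a ha b hb hab => (hf b hb).2 a (hab ▸ (hf a ha).1)

theorem mapsTo_of_isSoleArc (hf : ∀ a ∈ Supp x, IsSoleArc A x a (f a)) :
    Set.MapsTo f (Supp x) (Supp x) :=
  fun a ha => (hf a ha).1.2.1

theorem eq_apply_of_arc_of_isSoleArc (hf : ∀ a ∈ Supp x, IsSoleArc A x a (f a)) {a b : Fin n}
    (hab : Arc A x a b) : b = f a := by
  have hbij := ((Set.toFinite (Supp x)).injOn_iff_bijOn_of_mapsTo
    (mapsTo_of_isSoleArc hf)).mp (injOn_of_isSoleArc hf)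
  obtain ⟨c, hc, rfl⟩ := hbij.surjOn hab.2.1
  rw [(hf c hc).2 a hab]

theorem mapsTo_lt_of_isSoleArc (hf : ∀ a ∈ Supp x, IsSoleArc A x a (f a)) (hle : x' ≤ x)
    (hx' : ∀ i, x' i ≤ mpApply A x' i) :
    Set.MapsTo f {a | x' a < x a} {a | x' a < x a} := by
  intro a (ha : x' a < x a)
  have harc := (hf a ha.ne_bot).1
  refine lt_of_le_of_ne (hle (f a)) fun heq => ?_
  obtain ⟨k, hk, hx'k⟩ := exists_arc_eq_of_apply_eq hle (hx' (f a)) harc.2.2.2 harc.2.1 heq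
  exact ha.ne ((hf a ha.ne_bot).2 k hk ▸ hx'k)

theorem isolatedSet_diff_of_isSoleArc (hf : ∀ a ∈ Supp x, IsSoleArc A x a (f a))
    {U : Set (Fin n)} (hU : Set.MapsTo f U U) (hW : Set.MapsTo f (Supp x \ U) (Supp x \ U)) :
    IsolatedSet A x (Supp x \ U) := by
  refine ⟨Set.sdiff_subset, fun a b hab => ?_⟩
  rw [eq_apply_of_arc_of_isSoleArc hf hab]
  exact ⟨fun ha => hW ha, fun hfa => ⟨hab.1, fun ha => hfa.2 (hU ha)⟩⟩

theorem supp_diff_lt_ssubset (hle : x' ≤ x) (hne : x' ≠ x) :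
    Supp x \ {a | x' a < x a} ⊂ Supp x := by
  refine ⟨Set.sdiff_subset, fun hsub => hne (funext fun a => ?_)⟩
  by_cases ha : a ∈ Supp x
  · exact (hle a).eq_of_not_lt (hsub ha).2
  · exact le_antisymm (hle a) ((not_not.mp ha).symm ▸ bot_le)

end TangentDigraph

theorem stmt9_general {n : ℕ} (A : Matrix (Fin n) (Fin n) (WithBot ℝ)) (x : Fin n → WithBot ℝ)
    (hiso : ∀ W : Set (Fin n), W.Nonempty → W ⊂ Supp x → ¬ IsolatedSet A x W)
    (hinv : ∀ i ∈ Supp x, Invariable A x i) :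
    ∀ x' ∈ BelowSet A x, ∀ i ∈ Supp x, x' i < x i := by
  rintro x' ⟨⟨hx', -⟩, hle, hne⟩ i hi
  by_contra hi'
  obtain ⟨f, hf⟩ := exists_isSoleArc_map hinv
  have hU := mapsTo_lt_of_isSoleArc hf hle hx'
  have hW := Set.mapsTo_diff_of_injOn (injOn_of_isSoleArc hf) (mapsTo_of_isSoleArc hf)
    (fun a (ha : x' a < x a) => ha.ne_bot) (Set.toFinite _) hU
  exact hiso (Supp x \ {a | x' a < x a}) ⟨i, hi, hi'⟩ (supp_diff_lt_ssubset hle hne)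
    (isolatedSet_diff_of_isSoleArc hf hU hW)

/-- no nonempty proper isolated subset and all nodes invariable imply that
any `x' ∈ 𝒳^{≤x}` satisfies `x'ᵢ < xᵢ` on all of `Supp x`. -/
theorem stmt9 {n : ℕ} (A : Matrix (Fin n) (Fin n) (WithBot ℝ)) (x : Fin n → WithBot ℝ)
    (hx : x ∈ SuperEig A)
    (hiso : ∀ W : Set (Fin n), W.Nonempty → W ⊂ Supp x → ¬ IsolatedSet A x W)
    (hinv : ∀ i ∈ Supp x, Invariable A x i) :
    ∀ x' ∈ BelowSet A x, ∀ i ∈ Supp x, x' i < x i :=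
  stmt9_general A x hiso hinv
end
end

section
/- Let x ∈ 𝒳. Then the following are equivalent: (a) no nonempty proper subset of Supp(x) is isolated in the tangent digraph 𝒟_x and every node of Supp(x) is invariable in 𝒟_x; (b) there exist s ≥ 2 and an enumeration i₁,…,i_s of all the (pairwise distinct) nodes of Supp(x) such that the arcs of 𝒟_x are exactly (i₁,i₂), (i₂,i₃), …, (i_{s−1},i_s), (i_s,i₁), i.e., 𝒟_x is a single elementary cycle through all nodes of Supp(x). -/
open scoped Classical

noncomputable section

/-!
If every node `i` of the support has a private successor (an out-neighbour whose only in-arc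
comes from `i`), choosing one for each node gives an injective, hence bijective, map `σ` of the
finite support, and every arc has the form `(i, σ i)`. An orbit of `σ` is then isolated, so the
absence of proper isolated sets leaves a single orbit, which is a cycle indexed by `ZMod` of the
period of `σ`; the period is at least `2` because `σ` has no fixed points. Conversely, on a cycle
indexed by `ZMod s` the arc `(e t, e (t + 1))` is the only in-arc of its head, and a set of
indices closed under `t ↦ t + 1` is everything.
-/

open Function Set

theorem ZMod.eq_univ_of_add_one_mem {s : ℕ} [NeZero s] {T : Set (ZMod s)} (hT : T.Nonempty)
    (h : ∀ t ∈ T, t + 1 ∈ T) : T = univ := by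
  obtain ⟨t₀, ht₀⟩ := hT
  have hnat : ∀ m : ℕ, t₀ + m ∈ T := by
    intro m
    induction m with
    | zero => simpa using ht₀
    | succ m ih => simpa [add_assoc] using h _ ih
  refine eq_univ_of_forall fun t => ?_
  simpa using hnat (t - t₀).val

namespace Equiv.Perm

variable {α : Type*}

def orbitEnum (σ : Perm α) (a : α) (k : ZMod (minimalPeriod σ a)) : α :=
  (MulAction.orbitZPowersEquiv σ a).symm k

variable (σ : Perm α) (a : α)

theorem orbitEnum_injective : Injective (σ.orbitEnum a) :=
  Subtype.val_injective.comp (MulAction.orbitZPowersEquiv σ a).symm.injective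

theorem orbitEnum_intCast (m : ℤ) : σ.orbitEnum a m = (σ ^ m) a :=
  congrArg Subtype.val (MulAction.orbitZPowersEquiv_symm_apply' σ a m)

theorem orbitEnum_zero : σ.orbitEnum a 0 = a := by
  simpa using σ.orbitEnum_intCast a 0

theorem orbitEnum_add_one (k : ZMod (minimalPeriod σ a)) :
    σ.orbitEnum a (k + 1) = σ (σ.orbitEnum a k) := by
  rw [add_comm, ← ZMod.intCast_zmod_cast k, ← Int.cast_one, ← Int.cast_add, orbitEnum_intCast,
    orbitEnum_intCast, zpow_one_add, mul_apply]

theorem apply_mem_range_orbitEnum_iff {b : α} :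
    σ b ∈ range (σ.orbitEnum a) ↔ b ∈ range (σ.orbitEnum a) := by
  constructor
  · rintro ⟨k, hk⟩
    refine ⟨k - 1, σ.injective ?_⟩
    rw [← orbitEnum_add_one, sub_add_cancel, hk]
  · rintro ⟨k, rfl⟩
    exact ⟨k + 1, σ.orbitEnum_add_one a k⟩

theorem range_orbitEnum_subset [NeZero (minimalPeriod σ a)] {S : Set α} (hS : MapsTo σ S S)
    (ha : a ∈ S) : range (σ.orbitEnum a) ⊆ S := by
  have hall := ZMod.eq_univ_of_add_one_mem (T := σ.orbitEnum a ⁻¹' S)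
    ⟨0, by simpa [σ.orbitEnum_zero] using ha⟩
    fun t ht => by simpa [σ.orbitEnum_add_one] using hS ht
  exact range_subset_iff.2 (eq_univ_iff_forall.1 hall)

end Equiv.Perm

section Digraph

variable {α : Type*} {r : α → α → Prop} {S : Set α}

def IsPrivateSucc (r : α → α → Prop) (i j : α) : Prop :=
  j ≠ i ∧ r i j ∧ ∀ k, r k j → k = i

theorem exists_perm_rel_iff_of_forall_isPrivateSucc [Finite α] (hrS : ∀ a b, r a b → b ∈ S)
    (hpriv : ∀ i ∈ S, ∃ j, IsPrivateSucc r i j) :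
    ∃ σ : Equiv.Perm α, (∀ a ∈ S, σ a ≠ a) ∧ ∀ a b, r a b ↔ a ∈ S ∧ b = σ a := by
  choose! g hg using hpriv
  have hgS : ∀ i ∈ S, g i ∈ S := fun i hi => hrS _ _ (hg i hi).2.1
  have hf_inj : Injective (S.piecewise g id) := by
    intro a b hab
    by_cases ha : a ∈ S <;> by_cases hb : b ∈ S <;>
      simp only [piecewise, ha, hb, if_true, if_false, id_eq] at hab
    · exact (hg b hb).2.2 a (hab ▸ (hg a ha).2.1)
    · exact absurd (hab ▸ hgS a ha) hb
    · exact absurd (hab ▸ hgS b hb) ha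
    · exact hab
  let σ := Equiv.ofBijective _ (Finite.injective_iff_bijective.mp hf_inj)
  have hσS : ∀ i ∈ S, σ i = g i := fun i hi => piecewise_eq_of_mem _ _ _ hi
  refine ⟨σ, fun a ha => hσS a ha ▸ (hg a ha).1, fun a b => ⟨fun hab => ?_, ?_⟩⟩
  · obtain ⟨i, rfl⟩ := σ.surjective b
    have hi : i ∈ S := by
      by_contra hi
      have hσi : σ i = i := piecewise_eq_of_notMem _ _ _ hi
      exact hi (hσi ▸ hrS _ _ hab)
    obtain rfl : a = i := (hg i hi).2.2 a (hσS i hi ▸ hab)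
    exact ⟨hi, rfl⟩
  · rintro ⟨ha, rfl⟩
    exact hσS a ha ▸ (hg a ha).2.1

theorem exists_zmod_cycle_of_forall_isPrivateSucc [Finite α] (hrS : ∀ a b, r a b → b ∈ S)
    {i₀ : α} (hi₀ : i₀ ∈ S)
    (hconn : ∀ W ⊆ S, W.Nonempty → (∀ a b, r a b → (a ∈ W ↔ b ∈ W)) → W = S)
    (hpriv : ∀ i ∈ S, ∃ j, IsPrivateSucc r i j) :
    ∃ s, 2 ≤ s ∧ ∃ e : ZMod s → α, Injective e ∧ range e = S ∧
      ∀ a b, r a b ↔ ∃ t, e t = a ∧ e (t + 1) = b := by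
  obtain ⟨σ, hmove, hr⟩ := exists_perm_rel_iff_of_forall_isPrivateSucc hrS hpriv
  have hpos : 0 < minimalPeriod σ i₀ :=
    minimalPeriod_pos_of_mem_periodicPts (σ.injective.mem_periodicPts i₀)
  have : NeZero (minimalPeriod σ i₀) := ⟨hpos.ne'⟩
  have hrange : range (σ.orbitEnum i₀) = S := by
    refine hconn _ (σ.range_orbitEnum_subset i₀ (fun a ha => hrS _ _ ((hr a _).2 ⟨ha, rfl⟩)) hi₀)
      (range_nonempty _) fun a b hab => ?_
    obtain ⟨-, rfl⟩ := (hr a b).1 hab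
    exact (σ.apply_mem_range_orbitEnum_iff i₀).symm
  have hne_one : minimalPeriod σ i₀ ≠ 1 :=
    fun h => hmove i₀ hi₀ (minimalPeriod_eq_one_iff_isFixedPt.1 h)
  refine ⟨_, by omega, σ.orbitEnum i₀, σ.orbitEnum_injective i₀, hrange, fun a b => ?_⟩
  rw [hr]
  constructor
  · rintro ⟨ha, rfl⟩
    obtain ⟨t, rfl⟩ := hrange ▸ ha
    exact ⟨t, rfl, σ.orbitEnum_add_one i₀ t⟩
  · rintro ⟨t, rfl, rfl⟩
    exact ⟨hrange ▸ mem_range_self t, σ.orbitEnum_add_one i₀ t⟩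

variable {s : ℕ} {e : ZMod s → α}

theorem eq_of_isolated_of_zmod_cycle [NeZero s] (hrange : range e = S)
    (harc : ∀ t, r (e t) (e (t + 1))) {W : Set α} (hW : W.Nonempty) (hWS : W ⊆ S)
    (hiso : ∀ a b, r a b → (a ∈ W ↔ b ∈ W)) : W = S := by
  refine hWS.antisymm ?_
  obtain ⟨w, hw⟩ := hW
  obtain ⟨t₀, rfl⟩ := hrange ▸ hWS hw
  have hall := ZMod.eq_univ_of_add_one_mem (T := e ⁻¹' W) ⟨t₀, hw⟩
    fun t ht => (hiso _ _ (harc t)).1 ht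
  rw [← hrange]
  exact range_subset_iff.2 (eq_univ_iff_forall.1 hall)

theorem isPrivateSucc_of_zmod_cycle (hs : 2 ≤ s) (he : Injective e)
    (harc : ∀ a b, r a b ↔ ∃ t, e t = a ∧ e (t + 1) = b) (t : ZMod s) :
    IsPrivateSucc r (e t) (e (t + 1)) := by
  have : Fact (1 < s) := ⟨hs⟩
  refine ⟨fun h => one_ne_zero (α := ZMod s) (by simpa using he h), (harc _ _).2 ⟨t, rfl, rfl⟩, ?_⟩
  intro k hk
  obtain ⟨u, rfl, hu⟩ := (harc k _).1 hk
  rw [add_left_injective 1 (he hu)]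

end Digraph

/-- (no nonempty proper isolated subset and all nodes invariable) iff
`𝒟ₓ` is a single elementary cycle through all the `s ≥ 2` nodes of `Supp x`. -/
theorem stmt10 {n : ℕ} (A : Matrix (Fin n) (Fin n) (WithBot ℝ)) (x : Fin n → WithBot ℝ)
    (hx : x ∈ SuperEig A) :
    ((∀ W : Set (Fin n), W.Nonempty → W ⊂ Supp x → ¬ IsolatedSet A x W) ∧
        ∀ i ∈ Supp x, Invariable A x i) ↔
      (∃ s : ℕ, 2 ≤ s ∧ ∃ e : ZMod s → Fin n, Function.Injective e ∧
        Set.range e = Supp x ∧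
        ∀ a b, Arc A x a b ↔ ∃ t : ZMod s, e t = a ∧ e (t + 1) = b) := by
  have hrS : ∀ a b, Arc A x a b → b ∈ Supp x := fun _ _ h => h.2.1
  constructor
  · rintro ⟨hiso, hinv⟩
    obtain ⟨i₀, hi₀⟩ := Function.ne_iff.mp hx.2
    refine exists_zmod_cycle_of_forall_isPrivateSucc hrS hi₀ (fun W hWS hW hWiso => ?_)
      fun i hi => (hinv i hi).2
    by_contra hne
    exact hiso W hW (hWS.ssubset_of_ne hne) ⟨hWS, hWiso⟩
  · rintro ⟨s, hs, e, he, hrange, harc⟩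
    have : NeZero s := ⟨by omega⟩
    refine ⟨fun W hW hWS ⟨_, hWiso⟩ => hWS.ne ?_, fun i hi => ?_⟩
    · exact eq_of_isolated_of_zmod_cycle hrange (fun t => (harc _ _).2 ⟨t, rfl, rfl⟩) hW
        hWS.subset hWiso
    · obtain ⟨t, rfl⟩ := hrange ▸ hi
      exact ⟨hi, _, isPrivateSucc_of_zmod_cycle hs he harc t⟩
end
end

section
/- Let x ∈ 𝒳. If no nonempty proper subset of Supp(x) is isolated in the tangent digraph 𝒟_x and every node of Supp(x) is invariable in 𝒟_x, then x is an extremal in 𝒳'. -/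
open scoped Classical

noncomputable section

/-!
Pick for each support node `i` an arc `i → f i` that is the only arc entering `f i`. Then `f` is
injective on the finite set `Supp x`, so it permutes it, and every arc of `𝒟ₓ` is of the form
`i → f i`.

Let `x = y ⊕ z` with `y, z ∈ 𝒳'` and let `S` be the set of support nodes where `y` agrees with
`x`. If `y` agrees with `x` at a node `b` entered by an arc, that arc is saturated at `x`, so the
maximum in `(A ⊗ y)_b ≥ y_b = x_b` is attained at the tail of an arc into `b`, where `y` then
agrees with `x` as well. Thus `S` is closed under predecessors; as `f` permutes `Supp x`,
`f '' S = S`, so `S` is closed under successors too, i.e. isolated. Hence either `S = ∅`, and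
then `z = x`, or `S = Supp x`, and then `y = x`.
-/

section UniquePredecessor

variable {α : Type*} {r : α → α → Prop} {s : Set α} {f : α → α}

theorem surjOn_of_unique_pred (hs : s.Finite) (hrs : ∀ a b, r a b → b ∈ s)
    (hf : ∀ a ∈ s, r a (f a) ∧ ∀ k, r k (f a) → k = a) : Set.SurjOn f s s := by
  have hmaps : Set.MapsTo f s s := fun a ha => hrs a (f a) (hf a ha).1
  exact ((hs.injOn_iff_bijOn_of_mapsTo hmaps).1 fun a ha a' ha' hfa =>
    ((hf a ha).2 a' (hfa ▸ (hf a' ha').1)).symm).surjOn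

theorem eq_of_rel_of_unique_pred (hs : s.Finite) (hrs : ∀ a b, r a b → b ∈ s)
    (hf : ∀ a ∈ s, r a (f a) ∧ ∀ k, r k (f a) → k = a) {a b : α} (hab : r a b) : b = f a := by
  obtain ⟨c, hc, rfl⟩ := surjOn_of_unique_pred hs hrs hf (hrs a b hab)
  rw [(hf c hc).2 a hab]

theorem mem_iff_mem_of_rel_of_unique_pred (hs : s.Finite) (hrs : ∀ a b, r a b → b ∈ s)
    (hf : ∀ a ∈ s, r a (f a) ∧ ∀ k, r k (f a) → k = a) {S : Set α} (hSs : S ⊆ s)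
    (hS : ∀ a b, r a b → b ∈ S → ∃ k ∈ S, r k b) {a b : α} (hab : r a b) :
    a ∈ S ↔ b ∈ S := by
  have hpred : ∀ a b, r a b → b ∈ S → a ∈ S := fun a b hab hb => by
    obtain ⟨k, hk, hkb⟩ := hS a b hab hb
    obtain rfl := eq_of_rel_of_unique_pred hs hrs hf hkb
    rwa [(hf k (hSs hk)).2 a hab]
  have himage : f '' S = S := by
    refine (Set.eq_of_subset_of_ncard_le (fun b hb => ?_) (Set.ncard_image_le (hs.subset hSs))
      ((hs.subset hSs).image f)).symm
    obtain ⟨c, hc, rfl⟩ := surjOn_of_unique_pred hs hrs hf (hSs hb)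
    exact ⟨c, hpred c (f c) (hf c hc).1 hb, rfl⟩
  refine ⟨fun ha => ?_, hpred a b hab⟩
  rw [eq_of_rel_of_unique_pred hs hrs hf hab, ← himage]
  exact Set.mem_image_of_mem f ha

end UniquePredecessor

section Tangent

variable {n : ℕ} {A : Matrix (Fin n) (Fin n) (WithBot ℝ)} {x w : Fin n → WithBot ℝ}

theorem le_mpApply_of_mem_superEig' (hw : w ∈ SuperEig' A) (i : Fin n) :
    w i ≤ mpApply A w i := by
  rcases hw with hw | rfl
  · exact hw.1 i
  · exact bot_le

theorem exists_arc_eq_of_eq (hw : ∀ i, w i ≤ mpApply A w i) (hwx : w ≤ x) {a b : Fin n}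
    (hab : Arc A x a b) (hwb : w b = x b) : ∃ k, Arc A x k b ∧ w k = x k := by
  obtain ⟨-, hxb, -, hsat⟩ := hab
  obtain ⟨k, -, hk⟩ := (Finset.le_sup_iff (Ne.bot_lt hxb)).1 (hwb ▸ hw b)
  have hwk : A b k + w k ≤ A b k + x k := by gcongr; exact hwx k
  have hkb : A b k + x k = x b := le_antisymm (hsat k) (hk.trans hwk)
  obtain ⟨hA, hxk⟩ := WithBot.add_ne_bot.1 (hkb ▸ hxb)
  exact ⟨k, ⟨hxk, hxb, hkb, hsat⟩, WithBot.add_left_cancel hA (le_antisymm hwk (hkb ▸ hk))⟩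

theorem isolatedSet_setOf_eq {f : Fin n → Fin n}
    (hf : ∀ a ∈ Supp x, Arc A x a (f a) ∧ ∀ k, Arc A x k (f a) → k = a)
    (hw : ∀ i, w i ≤ mpApply A w i) (hwx : w ≤ x) :
    IsolatedSet A x {i ∈ Supp x | w i = x i} := by
  refine ⟨fun i hi => hi.1, fun a b hab => mem_iff_mem_of_rel_of_unique_pred (Set.toFinite _)
    (fun a b h => h.2.1) hf (fun i hi => hi.1) ?_ hab⟩
  rintro a b hab ⟨-, hb⟩
  obtain ⟨k, hkb, hk⟩ := exists_arc_eq_of_eq hw hwx hab hb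
  exact ⟨k, ⟨hkb.1, hk⟩, hkb⟩

theorem eq_of_le_of_eqOn_supp (hwx : w ≤ x) (h : ∀ i ∈ Supp x, w i = x i) : w = x := by
  funext i
  by_cases hi : x i = ⊥
  · rw [hi, ← le_bot_iff, ← hi]
    exact hwx i
  · exact h i hi

end Tangent

/-- no nonempty proper isolated subset and all nodes invariable imply that
`x` is an extremal in `𝒳'`. -/
theorem stmt11 {n : ℕ} (A : Matrix (Fin n) (Fin n) (WithBot ℝ)) (x : Fin n → WithBot ℝ)
    (hx : x ∈ SuperEig A)
    (hiso : ∀ W : Set (Fin n), W.Nonempty → W ⊂ Supp x → ¬ IsolatedSet A x W)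
    (hinv : ∀ i ∈ Supp x, Invariable A x i) :
    IsExtremal A x := by
  refine ⟨Or.inl hx, fun y hy z _ hxyz => ?_⟩
  choose! f hf using fun i hi => (hinv i hi).2
  have hxyz' (i : Fin n) : x i = y i ⊔ z i := congrFun hxyz i
  have hyx : y ≤ x := fun i => (hxyz' i).ge.trans' le_sup_left
  have hzx : z ≤ x := fun i => (hxyz' i).ge.trans' le_sup_right
  have hS := isolatedSet_setOf_eq (fun a ha => (hf a ha).2) (le_mpApply_of_mem_superEig' hy) hyx
  rcases Set.eq_empty_or_nonempty {i ∈ Supp x | y i = x i} with hempty | hne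
  · refine Or.inr (eq_of_le_of_eqOn_supp hzx fun i hi => ?_).symm
    have hyi : y i ≠ x i := fun h => hempty.subset ⟨hi, h⟩
    rcases le_total (y i) (z i) with h | h
    · rw [hxyz' i, sup_eq_right.2 h]
    · exact absurd (by rw [hxyz' i, sup_eq_left.2 h]) hyi
  · have hSupp : {i ∈ Supp x | y i = x i} = Supp x :=
      by_contra fun h => hiso _ hne (hS.1.ssubset_of_ne h) hS
    exact Or.inl (eq_of_le_of_eqOn_supp hyx fun i hi => (hSupp.ge hi).2).symm
end
end

section
/- Let x ∈ 𝒳 and suppose: (i) no nonempty proper subset of Supp(x) is isolated in the tangent digraph 𝒟_x; (ii) 𝒟_x does not contain two node-disjoint cycles; (iii) there is exactly one variable node i in 𝒟_x and all other nodes of Supp(x) are invariable. Then x'_i < x_i for every x' ∈ 𝒳^{≤x}. -/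
open scoped Classical

noncomputable section

/-!
Suppose `x' ∈ 𝒳^{≤x}` with `x'ᵢ = xᵢ`, and split `Supp x` into the tight nodes `S`
(`x'ⱼ = xⱼ`, containing `i`) and `T` (`x'ⱼ < xⱼ`, nonempty). A tight node `b` that receives an arc
receives one from a tight node, because `x_b = x'_b ≤ (A ⊗ x')_b ≤ (A ⊗ x)_b ≤ x_b`.
Invariability gives every `j ≠ i` a successor `σ j` whose only in-arc is `(j, σ j)`. Then `σ` is
injective and maps `T` into `T`, so it permutes `T`: `T` contains a cycle and every arc into `T`
comes from `T`. As `S` is not isolated, some arc enters `S` from `T`, at a node without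
`σ`-preimage in `S`; following `σ` from there inside `S` produces a second cycle, disjoint from
the first.
-/

open Set Function

section TangentDigraph

variable {n : ℕ} {A : Matrix (Fin n) (Fin n) (WithBot ℝ)} {x : Fin n → WithBot ℝ}

variable (A x) in
def HasCycleIn (W : Set (Fin n)) : Prop :=
  ∃ k c, IsCycle A x k c ∧ c '' Iio k ⊆ W

theorem HasCycleIn.mono {V W : Set (Fin n)} (h : HasCycleIn A x V) (hVW : V ⊆ W) :
    HasCycleIn A x W := by
  obtain ⟨k, c, hc, hcV⟩ := h
  exact ⟨k, c, hc, hcV.trans hVW⟩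

theorem isCycle_iterate_of_isPeriodicPt {σ : Fin n → Fin n} {y : Fin n} {k : ℕ}
    (hk : 0 < k) (hy : IsPeriodicPt σ k y) (harc : ∀ t, Arc A x (σ^[t] y) (σ (σ^[t] y))) :
    IsCycle A x k (fun t => σ^[t] y) := by
  refine ⟨hk, fun t _ => ?_⟩
  show Arc A x (σ^[t] y) (σ^[(t + 1) % k] y)
  rw [hy.iterate_mod_apply, iterate_succ_apply']
  exact harc t

theorem hasCycleIn_of_mapsTo {W : Set (Fin n)} {σ : Fin n → Fin n} (hW : W.Nonempty)
    (hσW : MapsTo σ W W) (harc : ∀ j ∈ W, Arc A x j (σ j)) : HasCycleIn A x W := by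
  obtain ⟨a, ha⟩ := hW
  obtain ⟨k, m, hkm, hkm_eq⟩ := Finite.exists_ne_map_eq_of_infinite (fun t => σ^[t] a)
  wlog hlt : k < m generalizing k m
  · exact this m k hkm.symm hkm_eq.symm (by omega)
  have hper : IsPeriodicPt σ (m - k) (σ^[k] a) := by
    rw [IsPeriodicPt, IsFixedPt, ← iterate_add_apply, Nat.sub_add_cancel hlt.le]
    exact hkm_eq.symm
  have horb : ∀ t, σ^[t] (σ^[k] a) ∈ W := fun t => hσW.iterate t (hσW.iterate k ha)
  refine ⟨m - k, _, isCycle_iterate_of_isPeriodicPt (by omega) hper fun t => harc _ (horb t), ?_⟩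
  rintro _ ⟨t, -, rfl⟩
  exact horb t

theorem hasCycleIn_of_closedPath {S : Set (Fin n)} {σ : Fin n → Fin n} {b : Fin n} {q : ℕ}
    (hpath : ∀ t < q, σ^[t] b ∈ S ∧ Arc A x (σ^[t] b) (σ (σ^[t] b)))
    (hq : σ^[q] b ∈ S) (hclose : Arc A x (σ^[q] b) b) : HasCycleIn A x S := by
  refine ⟨q + 1, fun t => σ^[t % (q + 1)] b, ⟨by omega, fun t ht => ?_⟩, ?_⟩
  · dsimp only
    rw [Nat.mod_mod, Nat.mod_eq_of_lt ht]
    rcases (Nat.lt_succ_iff.mp ht).lt_or_eq with htq | rfl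
    · rw [Nat.mod_eq_of_lt (by omega : t + 1 < q + 1), iterate_succ_apply']
      exact (hpath t htq).2
    · rwa [Nat.mod_self, iterate_zero_apply]
  · rintro _ ⟨t, ht, rfl⟩
    replace ht : t < q + 1 := ht
    dsimp only
    rw [Nat.mod_eq_of_lt ht]
    rcases (Nat.lt_succ_iff.mp ht).lt_or_eq with htq | rfl
    exacts [(hpath t htq).1, hq]

/- Following `σ` from `b` either never reaches `i`, and the orbit closes up inside `S`, or it
does; then either `a` lies on the path from `b` to `i`, which the arc `a → b` closes, or the rest
of `S` is `σ`-invariant. -/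
theorem hasCycleIn_of_injOn {S : Set (Fin n)} {σ : Fin n → Fin n} {i a b : Fin n}
    (hσS : MapsTo σ (S \ {i}) S) (hσinj : InjOn σ (S \ {i}))
    (hσarc : ∀ j ∈ S \ {i}, Arc A x j (σ j))
    (ha : a ∈ S) (hb : b ∈ S) (hab : Arc A x a b) (hbσ : b ∉ σ '' (S \ {i})) :
    HasCycleIn A x S := by
  by_cases hreach : ∃ m, σ^[m] b = i
  · set m := Nat.find hreach
    have horb : ∀ t < m, σ^[t] b ∈ S \ {i} := by
      intro t ht
      induction t with
      | zero => exact ⟨hb, Nat.find_min hreach ht⟩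
      | succ t ih =>
        refine ⟨?_, Nat.find_min hreach ht⟩
        rw [iterate_succ_apply']
        exact hσS (ih (by omega))
    set P := (fun t => σ^[t] b) '' Iic m
    have hiP : i ∈ P := ⟨m, le_refl m, Nat.find_spec hreach⟩
    by_cases haP : a ∈ P
    · obtain ⟨q, hqm, rfl⟩ := haP
      have hqm : q ≤ m := hqm
      exact hasCycleIn_of_closedPath
        (fun t ht => ⟨(horb t (by omega)).1, hσarc _ (horb t (by omega))⟩) ha hab
    · have hSP : S \ P ⊆ S \ {i} := fun j hj => ⟨hj.1, fun h => hj.2 (h ▸ hiP)⟩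
      have hmaps : MapsTo σ (S \ P) (S \ P) := by
        intro j hj
        refine ⟨hσS (hSP hj), ?_⟩
        rintro ⟨t, htm, hσj⟩
        cases t with
        | zero => exact hbσ ⟨j, hSP hj, hσj.symm⟩
        | succ t =>
          have htm : t < m := Nat.lt_of_succ_le htm
          dsimp only at hσj
          rw [iterate_succ_apply'] at hσj
          exact hj.2 ⟨t, htm.le, hσinj (horb t htm) (hSP hj) hσj⟩
      exact (hasCycleIn_of_mapsTo (W := S \ P) ⟨a, ha, haP⟩ hmaps
        fun j hj => hσarc j (hSP hj)).mono sdiff_subset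
  · push Not at hreach
    have horb : ∀ t, σ^[t] b ∈ S \ {i} := by
      intro t
      induction t with
      | zero => exact ⟨hb, hreach 0⟩
      | succ t ih => exact ⟨by rw [iterate_succ_apply']; exact hσS ih, hreach _⟩
    have hmaps : MapsTo σ (range fun t => σ^[t] b) (range fun t => σ^[t] b) := by
      rintro _ ⟨t, rfl⟩
      exact ⟨t + 1, iterate_succ_apply' σ t b⟩
    refine (hasCycleIn_of_mapsTo (W := range fun t => σ^[t] b) ⟨b, 0, rfl⟩ hmaps ?_).mono ?_
    · rintro _ ⟨t, rfl⟩
      exact hσarc _ (horb t)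
    · rintro _ ⟨t, rfl⟩
      exact (horb t).1

theorem not_disjoint_of_hasCycleIn
    (hcyc : ∀ (k₁ k₂ : ℕ) (c₁ c₂ : ℕ → Fin n), IsCycle A x k₁ c₁ → IsCycle A x k₂ c₂ →
      ¬ Disjoint (c₁ '' Iio k₁) (c₂ '' Iio k₂))
    {V W : Set (Fin n)} (hV : HasCycleIn A x V) (hW : HasCycleIn A x W) : ¬ Disjoint V W := by
  obtain ⟨k₁, c₁, hc₁, hc₁V⟩ := hV
  obtain ⟨k₂, c₂, hc₂, hc₂W⟩ := hW
  exact fun hVW => hcyc k₁ k₂ c₁ c₂ hc₁ hc₂ (hVW.mono hc₁V hc₂W)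

variable (A x) in
def IsPrivateSuccOn (D : Set (Fin n)) (σ : Fin n → Fin n) : Prop :=
  ∀ j ∈ D, Arc A x j (σ j) ∧ ∀ k, Arc A x k (σ j) → k = j

theorem exists_isPrivateSuccOn {D : Set (Fin n)} (hD : ∀ j ∈ D, Invariable A x j) :
    ∃ σ, IsPrivateSuccOn A x D σ := by
  have h : ∀ j ∈ D, ∃ j', Arc A x j j' ∧ ∀ k, Arc A x k j' → k = j := fun j hj =>
    let ⟨_, j', _, hjj', hsole⟩ := hD j hj
    ⟨j', hjj', hsole⟩
  choose! σ hσ using h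
  exact ⟨σ, hσ⟩

theorem IsPrivateSuccOn.injOn {D : Set (Fin n)} {σ : Fin n → Fin n}
    (hσ : IsPrivateSuccOn A x D σ) : InjOn σ D :=
  fun u hu v hv huv => ((hσ u hu).2 v (huv ▸ (hσ v hv).1)).symm

section Below

variable {x' : Fin n → WithBot ℝ}

theorem exists_arc_eq_of_arc (hx' : ∀ j, x' j ≤ mpApply A x' j) (hle : x' ≤ x) {b c : Fin n}
    (hcb : Arc A x c b) (hb : x' b = x b) : ∃ a, x' a = x a ∧ Arc A x a b := by
  have : Nonempty (Fin n) := ⟨b⟩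
  obtain ⟨a, -, ha⟩ :=
    Finset.exists_mem_eq_sup Finset.univ Finset.univ_nonempty fun j => A b j + x' j
  have hsat := hcb.2.2.2
  have h₁ : x b ≤ A b a + x' a := hb ▸ (hx' b).trans_eq ha
  have h₂ : A b a + x' a ≤ A b a + x a := add_le_add_right (hle a) _
  have hxb : A b a + x a = x b := le_antisymm (hsat a) (h₁.trans h₂)
  have hAba : A b a ≠ ⊥ := fun h => hcb.2.1 (by rw [← hxb, h, WithBot.bot_add])
  have hxa : x a ≠ ⊥ := fun h => hcb.2.1 (by rw [← hxb, h, WithBot.add_bot])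
  exact ⟨a, WithBot.add_left_cancel hAba (le_antisymm h₂ (hxb ▸ h₁)), hxa, hcb.2.1, hxb, hsat⟩

theorem setOf_lt_subset {i : Fin n} (hi : x' i = x i) : {j | x' j < x j} ⊆ Supp x \ {i} :=
  fun _ hj => ⟨ne_bot_of_gt hj, fun h => (h ▸ hj : x' i < x i).ne hi⟩

theorem mapsTo_setOf_lt (hx' : ∀ j, x' j ≤ mpApply A x' j) (hle : x' ≤ x)
    {D : Set (Fin n)} {σ : Fin n → Fin n} (hσ : IsPrivateSuccOn A x D σ)
    (hTD : {j | x' j < x j} ⊆ D) : MapsTo σ {j | x' j < x j} {j | x' j < x j} := by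
  intro j hj
  refine (hle _).lt_of_ne fun heq => ?_
  obtain ⟨a, ha, hArc⟩ := exists_arc_eq_of_arc hx' hle (hσ j (hTD hj)).1 heq
  exact (hj : x' j < x j).ne ((hσ j (hTD hj)).2 a hArc ▸ ha)

theorem lt_of_arc_of_lt (hx' : ∀ j, x' j ≤ mpApply A x' j) (hle : x' ≤ x)
    {D : Set (Fin n)} {σ : Fin n → Fin n} (hσ : IsPrivateSuccOn A x D σ)
    (hTD : {j | x' j < x j} ⊆ D) {a b : Fin n} (hab : Arc A x a b) (hb : x' b < x b) :
    x' a < x a := by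
  obtain ⟨t, ht, rfl⟩ := (((toFinite _).injOn_iff_bijOn_of_mapsTo
    (mapsTo_setOf_lt hx' hle hσ hTD)).mp (hσ.injOn.mono hTD)).surjOn hb
  exact (hσ t (hTD ht)).2 a hab ▸ ht

theorem hasCycleIn_sep_eq (hx' : ∀ j, x' j ≤ mpApply A x' j) (hle : x' ≤ x) {i : Fin n}
    {σ : Fin n → Fin n} (hσ : IsPrivateSuccOn A x (Supp x \ {i}) σ) (hi : x' i = x i)
    (hS : ¬ IsolatedSet A x {j ∈ Supp x | x' j = x j}) :
    HasCycleIn A x {j ∈ Supp x | x' j = x j} := by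
  set S := {j ∈ Supp x | x' j = x j}
  have hTD := setOf_lt_subset hi
  have hlt : ∀ j ∈ Supp x, j ∉ S → x' j < x j :=
    fun j hj hjS => (hle j).lt_of_ne fun h => hjS ⟨hj, h⟩
  obtain ⟨a₀, b₀, harc₀, hcross⟩ : ∃ a₀ b₀, Arc A x a₀ b₀ ∧ ¬(a₀ ∈ S ↔ b₀ ∈ S) := by
    by_contra! h
    exact hS ⟨sep_subset _ _, h⟩
  have hb₀S : b₀ ∈ S := by
    by_contra hb₀S
    have ha₀ := lt_of_arc_of_lt hx' hle hσ hTD harc₀ (hlt b₀ harc₀.2.1 hb₀S)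
    exact hcross (iff_of_false (fun h => ha₀.ne h.2) hb₀S)
  have ha₀ : x' a₀ < x a₀ := hlt a₀ harc₀.1 fun h => hcross (iff_of_true h hb₀S)
  obtain ⟨a, ha, hab⟩ := exists_arc_eq_of_arc hx' hle harc₀ hb₀S.2
  have hSD : S \ {i} ⊆ Supp x \ {i} := sdiff_subset_sdiff_left (sep_subset _ _)
  refine hasCycleIn_of_injOn (i := i) ?_ (hσ.injOn.mono hSD) (fun j hj => (hσ j (hSD hj)).1)
    ⟨hab.1, ha⟩ hb₀S hab ?_
  · intro j hj
    have hjσ := (hσ j (hSD hj)).1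
    by_contra hσj
    exact (lt_of_arc_of_lt hx' hle hσ hTD hjσ (hlt _ hjσ.2.1 hσj)).ne hj.1.2
  · rintro ⟨s, hs, hσs⟩
    exact ha₀.ne ((hσ s (hSD hs)).2 a₀ (hσs ▸ harc₀) ▸ hs.1.2)

end Below

end TangentDigraph

theorem stmt12_general {n : ℕ} (A : Matrix (Fin n) (Fin n) (WithBot ℝ)) (x : Fin n → WithBot ℝ)
    (hiso : ∀ W : Set (Fin n), W.Nonempty → W ⊂ Supp x → ¬ IsolatedSet A x W)
    (hcyc : ∀ (k₁ k₂ : ℕ) (c₁ c₂ : ℕ → Fin n), IsCycle A x k₁ c₁ → IsCycle A x k₂ c₂ →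
      ¬ Disjoint (c₁ '' Set.Iio k₁) (c₂ '' Set.Iio k₂))
    (i : Fin n) (hvar : VarNode A x i)
    (hinv : ∀ j ∈ Supp x, j ≠ i → Invariable A x j) :
    ∀ x' ∈ BelowSet A x, x' i < x i := by
  rintro x' ⟨hx', hle, hne⟩
  by_contra hlt
  have hi : x' i = x i := (hle i).eq_of_not_lt hlt
  have hxi : x i ≠ ⊥ := hvar.elim And.left And.left
  obtain ⟨σ, hσ⟩ := exists_isPrivateSuccOn fun j (hj : j ∈ Supp x \ {i}) => hinv j hj.1 hj.2
  obtain ⟨t, ht⟩ : ∃ t, x' t < x t := (Pi.lt_def.mp (hle.lt_of_ne hne)).2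
  have hTD := setOf_lt_subset hi
  have hS := hasCycleIn_sep_eq hx'.1 hle hσ hi <| hiso _ ⟨i, hxi, hi⟩
    ⟨sep_subset _ _, fun h => ht.ne (h (hTD ht).1).2⟩
  have hT := hasCycleIn_of_mapsTo ⟨t, ht⟩ (mapsTo_setOf_lt hx'.1 hle hσ hTD)
    fun j hj => (hσ j (hTD hj)).1
  exact not_disjoint_of_hasCycleIn hcyc hS hT <|
    Set.disjoint_left.mpr fun j hjS hjT => (hjT : x' j < x j).ne hjS.2

/-- under conditions (i)-(iii), any `x' ∈ 𝒳^{≤x}` satisfies `x'ᵢ < xᵢ`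
at the unique variable node `i`. -/
theorem stmt12 {n : ℕ} (A : Matrix (Fin n) (Fin n) (WithBot ℝ)) (x : Fin n → WithBot ℝ)
    (hx : x ∈ SuperEig A)
    (hiso : ∀ W : Set (Fin n), W.Nonempty → W ⊂ Supp x → ¬ IsolatedSet A x W)
    (hcyc : ∀ (k₁ k₂ : ℕ) (c₁ c₂ : ℕ → Fin n), IsCycle A x k₁ c₁ → IsCycle A x k₂ c₂ →
      ¬ Disjoint (c₁ '' Set.Iio k₁) (c₂ '' Set.Iio k₂))
    (i : Fin n) (hvar : VarNode A x i) (huniq : ∀ j, VarNode A x j → j = i)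
    (hinv : ∀ j ∈ Supp x, j ≠ i → Invariable A x j) :
    ∀ x' ∈ BelowSet A x, x' i < x i :=
  stmt12_general A x hiso hcyc i hvar hinv
end
end

section
/- Let x ∈ 𝒳 and suppose: (i) no nonempty proper subset of Supp(x) is isolated in the tangent digraph 𝒟_x; (ii) 𝒟_x does not contain two node-disjoint cycles; (iii) there is exactly one variable node in 𝒟_x and all other nodes of Supp(x) are invariable. Then x is an extremal in 𝒳'. -/
/-!
Let `y ≤ x` be a subsolution agreeing with `x` at the variable node `i₀`, and let `f` send each
invariable node `j` to an out-neighbour whose only in-arc comes from `j`. A subsolution that is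
tight at a node is tight at one of its in-neighbours, so the set `U` of support nodes where
`y < x` is mapped into itself by `f`; being injective, `f` permutes `U`. Hence `U` carries a cycle
of `𝒟ₓ`, no arc enters `U` from outside, and, `U` not being isolated, some arc leaves `U`. That arc
must end at the unique support node which is not an `f`-image, so every tight node has a tight
in-neighbour and the tight nodes carry a second cycle, disjoint from the first. Thus `y = x`;
since `x = y ⊕ z` forces `y` or `z` to agree with `x` at `i₀`, `x` is extremal.
-/

open scoped Classical

noncomputable section

theorem exists_cycle_of_forall_exists_pred {α : Type*} [Finite α] (R : α → α → Prop)
    {V : Set α} (hV : V.Nonempty) (hpred : ∀ v ∈ V, ∃ u ∈ V, R u v) :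
    ∃ (k : ℕ) (c : ℕ → α), (1 ≤ k ∧ ∀ t < k, R (c t) (c ((t + 1) % k))) ∧ ∀ t, c t ∈ V := by
  choose! p hpV hpR using hpred
  replace hpV : Set.MapsTo p V V := hpV
  obtain ⟨w, hwV, m, hm, hw⟩ : ∃ w ∈ V, ∃ m, 1 ≤ m ∧ p^[m] w = w := by
    obtain ⟨v, hv⟩ := hV
    obtain ⟨a, b, hab, heq⟩ := Finite.exists_ne_map_eq_of_infinite fun t => p^[t] v
    wlog hlt : a < b generalizing a b
    · exact this b a hab.symm heq.symm (by omega)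
    refine ⟨p^[a] v, hpV.iterate a hv, b - a, by omega, ?_⟩
    rw [← Function.iterate_add_apply, Nat.sub_add_cancel hlt.le, heq]
  -- the cycle runs backwards from `w` through one period of `p`
  refine ⟨m, fun t => p^[m - t] w, ⟨hm, fun t ht => ?_⟩, fun t => hpV.iterate _ hwV⟩
  show R (p^[m - t] w) (p^[m - (t + 1) % m] w)
  have hnext : p^[m - (t + 1) % m] w = p^[m - (t + 1)] w := by
    rcases Nat.lt_or_ge (t + 1) m with h | h
    · rw [Nat.mod_eq_of_lt h]
    · rw [show t + 1 = m by omega, Nat.mod_self, Nat.sub_zero, Nat.sub_self, hw]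
      rfl
  have hprev : p^[m - t] w = p (p^[m - (t + 1)] w) := by
    rw [← Function.iterate_succ_apply' p]
    congr 1
    omega
  rw [hnext, hprev]
  exact hpR _ (hpV.iterate _ hwV)

theorem Set.Finite.subsingleton_sdiff_image_sdiff_singleton {α : Type*} {s : Set α}
    (hs : s.Finite) {f : α → α} {a : α} (hmaps : Set.MapsTo f (s \ {a}) s)
    (hinj : Set.InjOn f (s \ {a})) : (s \ f '' (s \ {a})).Subsingleton := by
  intro b hb c hc
  by_contra hbc
  have hpair : {b, c} ⊆ s := Set.insert_subset hb.1 (Set.singleton_subset_iff.2 hc.1)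
  have himage : f '' (s \ {a}) ⊆ s \ {b, c} := by
    rintro _ ⟨d, hd, rfl⟩
    refine ⟨hmaps hd, ?_⟩
    rintro (h | h)
    exacts [hb.2 ⟨d, hd, h⟩, hc.2 ⟨d, hd, h⟩]
  have hle := Set.ncard_le_ncard himage hs.sdiff
  rw [hinj.ncard_image] at hle
  have hpred := Set.pred_ncard_le_ncard_sdiff_singleton s a
  have hcard := Set.ncard_sdiff_add_ncard_of_subset hpair hs
  rw [Set.ncard_pair hbc] at hcard
  omega

section TangentDigraph

variable {n : ℕ} {A : Matrix (Fin n) (Fin n) (WithBot ℝ)} {x : Fin n → WithBot ℝ}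

theorem isExtremal_of_forall_eq (hx : x ∈ SuperEig A) {i : Fin n} (hxi : x i ≠ ⊥)
    (h : ∀ y ∈ SuperEig A, y ≤ x → y i = x i → y = x) : IsExtremal A x := by
  refine ⟨Or.inl hx, fun y hy z hz hyz => ?_⟩
  have hdet : ∀ w ∈ SuperEig' A, w ≤ x → w i = x i → x = w := by
    rintro w (hw | rfl) hwx hwi
    · exact (h w hw hwx hwi).symm
    · exact absurd hwi.symm hxi
  have hsup : x i = y i ⊔ z i := congrFun hyz i
  rcases le_total (y i) (z i) with hle | hle
  · exact Or.inr (hdet z hz (hyz ▸ fun j => le_sup_right) (by rw [hsup, sup_eq_right.2 hle]))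
  · exact Or.inl (hdet y hy (hyz ▸ fun j => le_sup_left) (by rw [hsup, sup_eq_left.2 hle]))

theorem exists_arc_apply_eq {y : Fin n → WithBot ℝ} (hy : ∀ i, y i ≤ mpApply A y i)
    (hyx : y ≤ x) {a i : Fin n} (ha : Arc A x a i) (hyi : y i = x i) :
    ∃ j, Arc A x j i ∧ y j = x j := by
  obtain ⟨-, hxi, -, hmax⟩ := ha
  obtain ⟨j, -, hj⟩ := Finset.exists_mem_eq_sup Finset.univ ⟨i, Finset.mem_univ i⟩
    fun j => A i j + y j
  have hlow : x i ≤ A i j + y j := hyi ▸ hj ▸ hy i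
  have hmid : A i j + y j ≤ A i j + x j := add_le_add_right (hyx j) _
  have harc : A i j + x j = x i := le_antisymm (hmax j) (hlow.trans hmid)
  have hA : A i j ≠ ⊥ := fun h => hxi (by rw [← harc, h, WithBot.bot_add])
  have hxj : x j ≠ ⊥ := fun h => hxi (by rw [← harc, h, WithBot.add_bot])
  refine ⟨j, ⟨hxj, hxi, harc, hmax⟩, WithBot.add_left_cancel hA ?_⟩
  exact le_antisymm hmid (harc ▸ hlow)

def PrivateSucc (A : Matrix (Fin n) (Fin n) (WithBot ℝ)) (x : Fin n → WithBot ℝ) (i0 : Fin n)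
    (f : Fin n → Fin n) : Prop :=
  ∀ j ∈ Supp x, j ≠ i0 → Arc A x j (f j) ∧ ∀ k, Arc A x k (f j) → k = j

theorem exists_privateSucc {i0 : Fin n} (hinv : ∀ j ∈ Supp x, j ≠ i0 → Invariable A x j) :
    ∃ f, PrivateSucc A x i0 f := by
  choose! f harc huniq using fun j hj hji => (hinv j hj hji).2.imp fun _ h => h.2
  exact ⟨f, fun j hj hji => ⟨harc j hj hji, huniq j hj hji⟩⟩

namespace PrivateSucc

variable {i0 : Fin n} {f : Fin n → Fin n}

theorem mapsTo (hf : PrivateSucc A x i0 f) : Set.MapsTo f (Supp x \ {i0}) (Supp x) :=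
  fun j hj => (hf j hj.1 hj.2).1.2.1

theorem injOn (hf : PrivateSucc A x i0 f) : Set.InjOn f (Supp x \ {i0}) :=
  fun j₁ h₁ j₂ h₂ heq => (hf j₂ h₂.1 h₂.2).2 j₁ (heq ▸ (hf j₁ h₁.1 h₁.2).1)

theorem exists_arc_of_arc (hf : PrivateSucc A x i0 f) {a b : Fin n} (hab : Arc A x a b)
    (hb : b ∉ f '' (Supp x \ {i0})) : ∀ v ∈ Supp x, ∃ u, Arc A x u v := by
  intro v hv
  by_cases hvim : v ∈ f '' (Supp x \ {i0})
  · obtain ⟨d, hd, rfl⟩ := hvim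
    exact ⟨d, (hf d hd.1 hd.2).1⟩
  · -- by counting, `b` is the only node of the support without a private in-arc
    rw [(Set.toFinite _).subsingleton_sdiff_image_sdiff_singleton hf.mapsTo hf.injOn
      ⟨hv, hvim⟩ ⟨hab.2.1, hb⟩]
    exact ⟨a, hab⟩

variable {y : Fin n → WithBot ℝ}

theorem mapsTo_setOf_ne (hf : PrivateSucc A x i0 f) (hy : ∀ i, y i ≤ mpApply A y i)
    (hyx : y ≤ x) (hyi0 : y i0 = x i0) :
    Set.MapsTo f {v ∈ Supp x | y v ≠ x v} {v ∈ Supp x | y v ≠ x v} := by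
  rintro v ⟨hv, hyv⟩
  have hvi0 : v ≠ i0 := by
    rintro rfl
    exact hyv hyi0
  obtain ⟨harc, huniq⟩ := hf v hv hvi0
  refine ⟨harc.2.1, fun htight => hyv ?_⟩
  obtain ⟨j, hj, hjeq⟩ := exists_arc_apply_eq hy hyx harc htight
  exact huniq j hj ▸ hjeq

theorem eq_of_le (hf : PrivateSucc A x i0 f) (hx0 : x i0 ≠ ⊥)
    (hiso : ∀ W : Set (Fin n), W.Nonempty → W ⊂ Supp x → ¬ IsolatedSet A x W)
    (hcyc : ∀ (k₁ k₂ : ℕ) (c₁ c₂ : ℕ → Fin n), IsCycle A x k₁ c₁ → IsCycle A x k₂ c₂ →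
      ¬ Disjoint (c₁ '' Set.Iio k₁) (c₂ '' Set.Iio k₂))
    (hy : ∀ i, y i ≤ mpApply A y i) (hyx : y ≤ x) (hyi0 : y i0 = x i0) : y = x := by
  set U := {v ∈ Supp x | y v ≠ x v}
  by_contra hne
  have hU : U.Nonempty := by
    obtain ⟨v, hv⟩ := Function.ne_iff.1 hne
    exact ⟨v, fun hxv => hv (by rw [hxv]; exact le_bot_iff.1 (hxv ▸ hyx v)), hv⟩
  have hi0U : i0 ∉ U := fun h => h.2 hyi0
  have hUsub : U ⊆ Supp x \ {i0} := fun v hv => ⟨hv.1, fun h => hi0U (h ▸ hv)⟩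
  have hmaps := hf.mapsTo_setOf_ne hy hyx hyi0
  have hsurj : Set.SurjOn f U U :=
    ((Set.toFinite U).injOn_iff_bijOn_of_mapsTo hmaps).1 (hf.injOn.mono hUsub) |>.surjOn
  have hpriv : ∀ v ∈ U, ∃ u ∈ U, Arc A x u v ∧ f u = v := fun v hv => by
    obtain ⟨u, hu, rfl⟩ := hsurj hv
    exact ⟨u, hu, (hf u (hUsub hu).1 (hUsub hu).2).1, rfl⟩
  obtain ⟨a, b, hab, haU, hbU⟩ : ∃ a b, Arc A x a b ∧ a ∈ U ∧ b ∉ U := by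
    have hnot : ¬ ∀ a b, Arc A x a b → (a ∈ U ↔ b ∈ U) := fun h =>
      hiso U hU ⟨Set.sep_subset _ _, fun h => hi0U (h hx0)⟩ ⟨Set.sep_subset _ _, h⟩
    push Not at hnot
    obtain ⟨a, b, hab, ⟨haU, hbU⟩ | ⟨haU, hbU⟩⟩ := hnot
    · exact ⟨a, b, hab, haU, hbU⟩
    · obtain ⟨c, hcU, -, rfl⟩ := hpriv b hbU
      exact absurd ((hf c (hUsub hcU).1 (hUsub hcU).2).2 a hab ▸ hcU) haU
  have hbim : b ∉ f '' (Supp x \ {i0}) := by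
    rintro ⟨d, hd, rfl⟩
    exact hbU ((hf d hd.1 hd.2).2 a hab ▸ hmaps haU)
  obtain ⟨k₁, c₁, hc₁, hc₁U⟩ := exists_cycle_of_forall_exists_pred (Arc A x) hU
    fun v hv => (hpriv v hv).imp fun _ hu => ⟨hu.1, hu.2.1⟩
  obtain ⟨k₂, c₂, hc₂, hc₂T⟩ := exists_cycle_of_forall_exists_pred (Arc A x)
    (V := {v ∈ Supp x | y v = x v}) ⟨b, hab.2.1, not_not.1 fun h => hbU ⟨hab.2.1, h⟩⟩
    fun v hv => by
      obtain ⟨u, hu⟩ := hf.exists_arc_of_arc hab hbim v hv.1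
      obtain ⟨j, hj, hjeq⟩ := exists_arc_apply_eq hy hyx hu hv.2
      exact ⟨j, ⟨hj.1, hjeq⟩, hj⟩
  refine hcyc k₁ k₂ c₁ c₂ hc₁ hc₂ (Set.disjoint_left.2 ?_)
  rintro _ ⟨t, -, rfl⟩ ⟨s, -, hs⟩
  exact (hc₁U t).2 (hs ▸ (hc₂T s).2)

end PrivateSucc

end TangentDigraph

/-- under conditions (i)-(iii), `x` is an extremal in `𝒳'`. -/
theorem stmt13 {n : ℕ} (A : Matrix (Fin n) (Fin n) (WithBot ℝ)) (x : Fin n → WithBot ℝ)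
    (hx : x ∈ SuperEig A)
    (hiso : ∀ W : Set (Fin n), W.Nonempty → W ⊂ Supp x → ¬ IsolatedSet A x W)
    (hcyc : ∀ (k₁ k₂ : ℕ) (c₁ c₂ : ℕ → Fin n), IsCycle A x k₁ c₁ → IsCycle A x k₂ c₂ →
      ¬ Disjoint (c₁ '' Set.Iio k₁) (c₂ '' Set.Iio k₂))
    (hvar : ∃ i, VarNode A x i ∧ (∀ j, VarNode A x j → j = i) ∧
      ∀ j ∈ Supp x, j ≠ i → Invariable A x j) :
    IsExtremal A x := by
  obtain ⟨i0, hvar, -, hinv⟩ := hvar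
  have hx0 : x i0 ≠ ⊥ := hvar.elim And.left And.left
  obtain ⟨f, hf⟩ := exists_privateSucc hinv
  exact isExtremal_of_forall_eq hx hx0 fun y hy hyx hyi0 =>
    hf.eq_of_le hx0 hiso hcyc hy.1 hyx hyi0
end
end

section
/- Let x ∈ 𝒳 with |Supp(x)| = s, and suppose the tangent digraph 𝒟_x has exactly one variable node and all other s − 1 nodes are invariable. Then at least s − 1 nodes j ∈ Supp(x) satisfy: (j,j) is not an arc of 𝒟_x and there is exactly one node k ∈ Supp(x) with arc (k,j) in 𝒟_x. -/
/-!
Every invariable node `j` has a successor `t ≠ j` whose only incoming arc comes from `j`;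
in particular `t` carries no loop. Since `t` determines `j`, this gives an injection of the
`s - 1` invariable nodes into the nodes without a loop and with a unique incoming arc.
-/

open scoped Classical

noncomputable section

def loopFreeUniqueInArcNodes {n : ℕ} (A : Matrix (Fin n) (Fin n) (WithBot ℝ))
    (x : Fin n → WithBot ℝ) : Set (Fin n) :=
  {j | j ∈ Supp x ∧ ¬ Arc A x j j ∧ ∃! k, Arc A x k j}

section

variable {n : ℕ} {A : Matrix (Fin n) (Fin n) (WithBot ℝ)} {x : Fin n → WithBot ℝ}

theorem Invariable.exists_mem_loopFreeUniqueInArcNodes {j : Fin n} (hj : Invariable A x j) :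
    ∃ t ∈ loopFreeUniqueInArcNodes A x, Arc A x j t ∧ ∀ k, Arc A x k t → k = j := by
  obtain ⟨-, t, htj, harc, honly⟩ := hj
  exact ⟨t, ⟨harc.2.1, fun hloop => htj (honly t hloop), j, harc, honly⟩, harc, honly⟩

theorem ncard_le_ncard_loopFreeUniqueInArcNodes {S : Set (Fin n)}
    (hS : ∀ j ∈ S, Invariable A x j) : S.ncard ≤ (loopFreeUniqueInArcNodes A x).ncard := by
  choose! f hf_mem hf_arc hf_only using
    fun j hj => (hS j hj).exists_mem_loopFreeUniqueInArcNodes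
  have hinj : Set.InjOn f S := fun a ha b hb hab => hf_only b hb a (hab ▸ hf_arc a ha)
  rw [← hinj.ncard_image]
  exact Set.ncard_le_ncard (Set.image_subset_iff.2 hf_mem)

end

theorem stmt15_general {n : ℕ} (A : Matrix (Fin n) (Fin n) (WithBot ℝ)) (x : Fin n → WithBot ℝ)
    (i : Fin n)
    (hinv : ∀ j ∈ Supp x, j ≠ i → Invariable A x j) :
    (Supp x).ncard - 1 ≤
      {j | j ∈ Supp x ∧ ¬ Arc A x j j ∧ ∃! k, Arc A x k j}.ncard := by
  have hdiff : (Supp x).ncard ≤ (Supp x \ {i}).ncard + 1 := by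
    simpa using Set.ncard_le_ncard_sdiff_add_ncard (Supp x) {i} (Set.finite_singleton i)
  have hinj : (Supp x \ {i}).ncard ≤ (loopFreeUniqueInArcNodes A x).ncard :=
    ncard_le_ncard_loopFreeUniqueInArcNodes fun j hj => hinv j hj.1 hj.2
  exact Nat.sub_le_of_le_add (hdiff.trans (Nat.add_le_add_right hinj 1))

/-- if `𝒟ₓ` has exactly one variable node and all other nodes are
invariable, then at least `|Supp x| - 1` nodes have exactly one incoming arc and
no loop. -/
theorem stmt15 {n : ℕ} (A : Matrix (Fin n) (Fin n) (WithBot ℝ)) (x : Fin n → WithBot ℝ)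
    (hx : x ∈ SuperEig A) (i : Fin n)
    (hvar : VarNode A x i) (huniq : ∀ j, VarNode A x j → j = i)
    (hinv : ∀ j ∈ Supp x, j ≠ i → Invariable A x j) :
    (Supp x).ncard - 1 ≤
      {j | j ∈ Supp x ∧ ¬ Arc A x j j ∧ ∃! k, Arc A x k j}.ncard :=
  stmt15_general A x i hinv
end
end
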